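/- arXiv:1406.6723 — 7 statements merged into one kernel-verified Lean document; each statement's English description precedes it below -/
import Mathlib

section
/- Let U ⊆ ℂ be a nonempty open set, z ∈ U, and φ : U → 𝔻 a conformal equivalence onto the open unit disc 𝔻 = {w ∈ ℂ : |w| < 1} (a bijective holomorphic map with holomorphic inverse) with φ(z) = 0. Then for all integers 0 ≤ k ≤ m there exist complex numbers a₀, …, a_m such that the holomorphic function h = Σ_{i=0}^m a_i·φ^i satisfies: the i-th Taylor coefficient h^{(i)}(z)/i! equals 1 if i = k and equals 0 for every other i with 0 ≤ i ≤ m. -/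
/-!
Let `G = (ψ - z) ^ k`, analytic at `0`, and take for `a₀, …, a_m` its Taylor coefficients at `0`.
Since `ψ ∘ φ = id` near `z`, the difference `(w - z) ^ k - ∑ aₙ φ(w) ^ n` is the degree-`m`
Taylor remainder of `G` composed with `φ`. The remainder vanishes to order `m + 1` at `0` and
`φ z = 0`, so the composite vanishes to order at least `m + 1` at `z`. Hence `∑ aₙ φ ^ n` has
the same Taylor coefficients up to degree `m` at `z` as `(w - z) ^ k`, namely `δᵢₖ`.
-/

open Filter Topology

section
variable {𝕜 E : Type*} [NontriviallyNormedField 𝕜] [NormedAddCommGroup E] [NormedSpace 𝕜 E]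

theorem iteratedDeriv_sub_const_pow_self (z : 𝕜) (i k : ℕ) :
    iteratedDeriv i (fun w => (w - z) ^ k) z = if i = k then (k.factorial : 𝕜) else 0 := by
  simpa [iteratedDeriv_comp_sub_const i (fun w : 𝕜 => w ^ k) z, apply_ite] using
    iteratedDeriv_fun_pow_zero (𝕜 := 𝕜) (n := i) (m := k)

theorem AnalyticAt.analyticOrderAt_le_analyticOrderAt_comp {f : 𝕜 → E} {g : 𝕜 → 𝕜} {z₀ : 𝕜}
    (hf : AnalyticAt 𝕜 f (g z₀)) (hg : AnalyticAt 𝕜 g z₀) :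
    analyticOrderAt f (g z₀) ≤ analyticOrderAt (f ∘ g) z₀ := by
  have hpos : 1 ≤ analyticOrderAt (g · - g z₀) z₀ :=
    Order.one_le_iff_ne_zero.mpr (analyticOrderAt_ne_zero.mpr ⟨by fun_prop, sub_self _⟩)
  rw [hf.analyticOrderAt_comp hg]
  simpa using mul_le_mul_right hpos (analyticOrderAt f (g z₀))

variable [CharZero 𝕜] [CompleteSpace E]

theorem iteratedDeriv_eq_of_natCast_le_analyticOrderAt_sub {f g : 𝕜 → E} {z₀ : 𝕜} {n : ℕ}
    (hf : AnalyticAt 𝕜 f z₀) (hg : AnalyticAt 𝕜 g z₀)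
    (hfg : n ≤ analyticOrderAt (f - g) z₀) {i : ℕ} (hi : i < n) :
    iteratedDeriv i f z₀ = iteratedDeriv i g z₀ := by
  rw [natCast_le_analyticOrderAt_iff_iteratedDeriv_eq_zero (hf.sub hg)] at hfg
  rw [← sub_eq_zero, ← iteratedDeriv_sub hf.contDiffAt hg.contDiffAt]
  exact hfg i hi

theorem AnalyticAt.natCast_le_analyticOrderAt_sub_taylorSum {f : 𝕜 → E}
    (hf : AnalyticAt 𝕜 f 0) (n : ℕ) :
    n ≤ analyticOrderAt
      (fun z => f z - ∑ i ∈ Finset.range n, (z ^ i / i.factorial) • iteratedDeriv i f 0) 0 := by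
  obtain ⟨F, hF, hfF⟩ := hf.exists_eq_sum_add_pow_mul n
  have hsum : AnalyticAt 𝕜
      (fun z : 𝕜 => ∑ i ∈ Finset.range n, (z ^ i / i.factorial) • iteratedDeriv i f 0) 0 :=
    Finset.analyticAt_fun_sum _ fun i _ => by fun_prop
  rw [natCast_le_analyticOrderAt (hf.fun_sub hsum)]
  exact ⟨F, hF, Eventually.of_forall fun z => by simp [hfF z]⟩

end

theorem polynomial_in_conformal_equiv_with_prescribed_taylor_coefficient_general
    (U : Set ℂ) (hU : IsOpen U) (z : ℂ) (hz : z ∈ U)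
    (φ ψ : ℂ → ℂ)
    (hφa : AnalyticOnNhd ℂ φ U)
    (hψa : AnalyticOnNhd ℂ ψ (Metric.ball (0 : ℂ) 1))
    (hleft : ∀ w ∈ U, ψ (φ w) = w)
    (hz0 : φ z = 0) :
    ∀ k m : ℕ, k ≤ m → ∃ a : ℕ → ℂ,
      ∀ i ≤ m,
        ((Nat.factorial i : ℂ))⁻¹ *
            iteratedDeriv i (fun w => ∑ n ∈ Finset.range (m + 1), a n * φ w ^ n) z =
          if i = k then 1 else 0 := by
  intro k m _
  set G : ℂ → ℂ := fun ζ => (ψ ζ - z) ^ k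
  have hG : AnalyticAt ℂ G 0 := ((hψa 0 (by simp)).sub analyticAt_const).pow k
  set T : ℂ → ℂ := fun ζ => G ζ - ∑ n ∈ Finset.range (m + 1),
    (ζ ^ n / n.factorial) • iteratedDeriv n G 0
  refine ⟨fun n => iteratedDeriv n G 0 / n.factorial, fun i hi => ?_⟩
  set h : ℂ → ℂ := fun w => ∑ n ∈ Finset.range (m + 1),
    iteratedDeriv n G 0 / n.factorial * φ w ^ n
  have hφ : AnalyticAt ℂ φ z := hφa z hz
  have hh : AnalyticAt ℂ h z := Finset.analyticAt_fun_sum _ fun n _ => by fun_prop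
  have hremainder : (fun w => (w - z) ^ k) - h =ᶠ[𝓝 z] T ∘ φ := by
    filter_upwards [hU.mem_nhds hz] with w hw
    simp only [Pi.sub_apply, Function.comp_apply, T, G, h, hleft w hw, smul_eq_mul]
    exact congrArg _ (Finset.sum_congr rfl fun n _ => by ring)
  have hT : AnalyticAt ℂ T (φ z) := by
    rw [hz0]; exact hG.fun_sub (Finset.analyticAt_fun_sum _ fun n _ => by fun_prop)
  have horder : ((m + 1 : ℕ) : ℕ∞) ≤ analyticOrderAt ((fun w => (w - z) ^ k) - h) z := by
    rw [analyticOrderAt_congr hremainder]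
    refine (hG.natCast_le_analyticOrderAt_sub_taylorSum (m + 1)).trans ?_
    have hcomp := hT.analyticOrderAt_le_analyticOrderAt_comp hφ
    rwa [hz0] at hcomp
  rw [← iteratedDeriv_eq_of_natCast_le_analyticOrderAt_sub (by fun_prop) hh horder
    (Nat.lt_succ_of_le hi), iteratedDeriv_sub_const_pow_self]
  split_ifs with hik
  · subst hik; simp [Nat.factorial_ne_zero]
  · simp

/-- **Lemma on polynomials in a conformal equivalence.**
Let `U ⊆ ℂ` be a nonempty open set, `z ∈ U`, and `φ : U → 𝔻` a conformal equivalence onto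
the open unit disc (with holomorphic inverse `ψ`) such that `φ z = 0`. Then for all
`0 ≤ k ≤ m` there are complex numbers `a₀, …, a_m` such that the function
`h = ∑_{i=0}^m a_i φ^i` satisfies `h^{(i)}(z)/i! = δ_{ik}` for all `0 ≤ i ≤ m`. -/
theorem polynomial_in_conformal_equiv_with_prescribed_taylor_coefficient
    (U : Set ℂ) (hU : IsOpen U) (hne : U.Nonempty) (z : ℂ) (hz : z ∈ U)
    (φ ψ : ℂ → ℂ)
    (hφa : AnalyticOnNhd ℂ φ U) (hφm : Set.MapsTo φ U (Metric.ball (0 : ℂ) 1))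
    (hψa : AnalyticOnNhd ℂ ψ (Metric.ball (0 : ℂ) 1))
    (hψm : Set.MapsTo ψ (Metric.ball (0 : ℂ) 1) U)
    (hleft : ∀ w ∈ U, ψ (φ w) = w)
    (hright : ∀ w ∈ Metric.ball (0 : ℂ) 1, φ (ψ w) = w)
    (hz0 : φ z = 0) :
    ∀ k m : ℕ, k ≤ m → ∃ a : ℕ → ℂ,
      ∀ i ≤ m,
        ((Nat.factorial i : ℂ))⁻¹ *
            iteratedDeriv i (fun w => ∑ n ∈ Finset.range (m + 1), a n * φ w ^ n) z =
          if i = k then 1 else 0 :=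
  polynomial_in_conformal_equiv_with_prescribed_taylor_coefficient_general U hU z hz φ ψ hφa hψa
    hleft hz0
end

section
/- Let U ⊆ ℂ be a nonempty open set, z ∈ U, φ : U → 𝔻 a conformal equivalence with φ(z) = 0, and f : U → ℂ holomorphic. For n ≥ 0 let a_n denote the n-th Taylor coefficient of f ∘ φ⁻¹ at the origin. Then for every integer m ≥ 0, the functions f and Σ_{n=0}^m a_n·φ^n have the same derivatives at z up to order m, i.e., f^{(i)}(z) = (Σ_{n=0}^m a_n·φ^n)^{(i)}(z) for all 0 ≤ i ≤ m. -/
/-!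
With `g = f ∘ φ⁻¹`, the difference `g - ∑_{n ≤ m} aₙ uⁿ` is `g` minus its Taylor polynomial of
degree `m` at `0`, so it vanishes to order at least `m + 1` there. Near `z` we have
`f - ∑_{n ≤ m} aₙ φⁿ = (g - ∑_{n ≤ m} aₙ uⁿ) ∘ φ`, and composing with `φ`, which vanishes at `z`,
can only raise the order of vanishing. A function vanishing to order `m + 1` at `z` has zero
derivatives of order `≤ m` there.
-/

open Metric Filter Topology

section AnalyticOrder

variable {𝕜 E : Type*} [NontriviallyNormedField 𝕜] [NormedAddCommGroup E] [NormedSpace 𝕜 E]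

theorem natCast_le_analyticOrderAt_sub_taylor [CharZero 𝕜] [CompleteSpace E] {g : 𝕜 → E}
    (hg : AnalyticAt 𝕜 g 0) (n : ℕ) :
    n ≤ analyticOrderAt
      (fun u ↦ g u - ∑ i ∈ Finset.range n, (u ^ i / i.factorial) • iteratedDeriv i g 0) 0 := by
  obtain ⟨F, hF, hgF⟩ := hg.exists_eventuallyEq_sum_add_pow_mul n
  refine (natCast_le_analyticOrderAt (by fun_prop)).mpr ⟨F, hF, ?_⟩
  filter_upwards [hgF] with u hu
  rw [hu, sub_zero, add_sub_cancel_left]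

theorem le_analyticOrderAt_comp {h : 𝕜 → E} {φ : 𝕜 → 𝕜} {z₀ : 𝕜} {n : ℕ∞}
    (hh : AnalyticAt 𝕜 h (φ z₀)) (hφ : AnalyticAt 𝕜 φ z₀) (hn : n ≤ analyticOrderAt h (φ z₀)) :
    n ≤ analyticOrderAt (h ∘ φ) z₀ := by
  rw [hh.analyticOrderAt_comp hφ]
  have hφ_order : analyticOrderAt (φ · - φ z₀) z₀ ≠ 0 :=
    (AnalyticAt.analyticOrderAt_ne_zero (by fun_prop)).mpr (sub_self _)
  exact hn.trans (le_mul_of_one_le_right' (Order.one_le_iff_ne_zero.mpr hφ_order))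

theorem iteratedDeriv_eq_of_natCast_le_analyticOrderAt_sub_s1 [CharZero 𝕜] [CompleteSpace E]
    {f₁ f₂ : 𝕜 → E} {x : 𝕜} {n : ℕ} (hf₁ : AnalyticAt 𝕜 f₁ x) (hf₂ : AnalyticAt 𝕜 f₂ x)
    (hn : n ≤ analyticOrderAt (fun y ↦ f₁ y - f₂ y) x) {i : ℕ} (hi : i < n) :
    iteratedDeriv i f₁ x = iteratedDeriv i f₂ x := by
  have h := (natCast_le_analyticOrderAt_iff_iteratedDeriv_eq_zero (hf₁.fun_sub hf₂)).mp hn i hi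
  rwa [iteratedDeriv_fun_sub hf₁.contDiffAt hf₂.contDiffAt, sub_eq_zero] at h

end AnalyticOrder

theorem derivatives_agree_with_polynomial_in_conformal_equiv_general
    (U : Set ℂ) (hU : IsOpen U) (z : ℂ) (hz : z ∈ U)
    (φ ψ : ℂ → ℂ)
    (hφa : AnalyticOnNhd ℂ φ U)
    (hψa : AnalyticOnNhd ℂ ψ (Metric.ball (0 : ℂ) 1))
    (hleft : ∀ w ∈ U, ψ (φ w) = w)
    (hz0 : φ z = 0)
    (f : ℂ → ℂ) (hf : AnalyticOnNhd ℂ f U)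
    (a : ℕ → ℂ) (ha : ∀ n : ℕ, a n = ((Nat.factorial n : ℂ))⁻¹ * iteratedDeriv n (f ∘ ψ) 0) :
    ∀ m : ℕ, ∀ i ≤ m,
      iteratedDeriv i f z =
        iteratedDeriv i (fun w => ∑ n ∈ Finset.range (m + 1), a n * φ w ^ n) z := by
  intro m i hi
  have hφz := hφa z hz
  set P : ℂ → ℂ := fun u ↦ ∑ n ∈ Finset.range (m + 1), a n * u ^ n
  have hψ0 : ψ 0 = z := by rw [← hz0, hleft z hz]
  have hg : AnalyticAt ℂ (f ∘ ψ) 0 :=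
    (hψ0 ▸ hf z hz).comp (hψa 0 (mem_ball_self one_pos))
  have hP_taylor : P = fun u : ℂ ↦ ∑ n ∈ Finset.range (m + 1),
      (u ^ n / n.factorial) • iteratedDeriv n (f ∘ ψ) 0 := by
    funext u
    refine Finset.sum_congr rfl fun n _ ↦ ?_
    rw [ha, smul_eq_mul]
    ring
  have hgP : (m + 1 : ℕ) ≤ analyticOrderAt (fun u ↦ (f ∘ ψ) u - P u) (φ z) := by
    rw [hz0, hP_taylor]
    exact natCast_le_analyticOrderAt_sub_taylor hg (m + 1)
  have hf_eq : (fun w ↦ f w - P (φ w)) =ᶠ[𝓝 z] (fun u ↦ (f ∘ ψ) u - P u) ∘ φ := by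
    filter_upwards [hU.mem_nhds hz] with w hw
    simp [hleft w hw]
  refine iteratedDeriv_eq_of_natCast_le_analyticOrderAt_sub_s1 (hf z hz) (by fun_prop)
    ?_ (Nat.lt_succ_of_le hi)
  rw [analyticOrderAt_congr hf_eq]
  exact le_analyticOrderAt_comp (hz0 ▸ hg.fun_sub (by fun_prop)) hφz hgP

/-- **Taylor expansion in a conformal equivalence.**
Let `U ⊆ ℂ` be a nonempty open set, `z ∈ U`, `φ : U → 𝔻` a conformal equivalence (with
holomorphic inverse `ψ`) such that `φ z = 0`, and `f` holomorphic on `U`. Let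
`a n = (f ∘ φ⁻¹)^{(n)}(0)/n!` be the `n`-th Taylor coefficient of `f ∘ φ⁻¹` at the origin.
Then for every `m ≥ 0` the functions `f` and `∑_{n=0}^m a_n φ^n` have the same derivatives
at `z` up to order `m`. -/
theorem derivatives_agree_with_polynomial_in_conformal_equiv
    (U : Set ℂ) (hU : IsOpen U) (hne : U.Nonempty) (z : ℂ) (hz : z ∈ U)
    (φ ψ : ℂ → ℂ)
    (hφa : AnalyticOnNhd ℂ φ U) (hφm : Set.MapsTo φ U (Metric.ball (0 : ℂ) 1))
    (hψa : AnalyticOnNhd ℂ ψ (Metric.ball (0 : ℂ) 1))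
    (hψm : Set.MapsTo ψ (Metric.ball (0 : ℂ) 1) U)
    (hleft : ∀ w ∈ U, ψ (φ w) = w)
    (hright : ∀ w ∈ Metric.ball (0 : ℂ) 1, φ (ψ w) = w)
    (hz0 : φ z = 0)
    (f : ℂ → ℂ) (hf : AnalyticOnNhd ℂ f U)
    (a : ℕ → ℂ) (ha : ∀ n : ℕ, a n = ((Nat.factorial n : ℂ))⁻¹ * iteratedDeriv n (f ∘ ψ) 0) :
    ∀ m : ℕ, ∀ i ≤ m,
      iteratedDeriv i f z =
        iteratedDeriv i (fun w => ∑ n ∈ Finset.range (m + 1), a n * φ w ^ n) z :=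
  derivatives_agree_with_polynomial_in_conformal_equiv_general U hU z hz φ ψ hφa hψa hleft hz0 f hf
    a ha
end

section
/- Let 𝓕 be an admissible space of analytic functions from U to W with base point z ∈ U. Then for every w ∈ U and every integer n ≥ 0, the linear map 𝓕 → W, F ↦ F^{(n)}(w) (evaluation of the n-th derivative at w), is bounded. -/
open Metric Filter

noncomputable section

/-- `ψ` is a conformal equivalence from `U` onto the open unit disc. -/
def IsConfEquiv (U : Set ℂ) (ψ : ℂ → ℂ) : Prop :=
  ∃ ψi : ℂ → ℂ,
    AnalyticOnNhd ℂ ψ U ∧ Set.MapsTo ψ U (Metric.ball (0 : ℂ) 1) ∧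
    AnalyticOnNhd ℂ ψi (Metric.ball (0 : ℂ) 1) ∧ Set.MapsTo ψi (Metric.ball (0 : ℂ) 1) U ∧
    (∀ w ∈ U, ψi (ψ w) = w) ∧ (∀ w ∈ Metric.ball (0 : ℂ) 1, ψ (ψi w) = w)

/-- An admissible space of analytic functions from `U` to `W`, in the sense of
Kalton and Montgomery-Smith: a Banach space `𝓕` of `W`-valued analytic functions on `U`
(realized through an injective linear map `toFun`) such that evaluations are bounded and
multiplication by a conformal equivalence `ψ : U → 𝔻` is an isometry of `𝓕`. -/
structure AdmissibleSpace (U : Set ℂ) (W : Type*) [NormedAddCommGroup W] [NormedSpace ℂ W]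
    [CompleteSpace W] (𝓕 : Type*) [NormedAddCommGroup 𝓕] [NormedSpace ℂ 𝓕]
    [CompleteSpace 𝓕] where
  isOpen_U : IsOpen U
  nonempty_U : U.Nonempty
  conf : ∃ ψ, IsConfEquiv U ψ
  toFun : 𝓕 →ₗ[ℂ] ℂ → W
  analyticOn : ∀ F : 𝓕, AnalyticOnNhd ℂ (toFun F) U
  ext_on : ∀ F G : 𝓕, (∀ w ∈ U, toFun F w = toFun G w) → F = G
  eval_bound : ∀ w ∈ U, ∃ C : ℝ, ∀ F : 𝓕, ‖toFun F w‖ ≤ C * ‖F‖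
  smul_mem : ∀ ψ, IsConfEquiv U ψ → ∀ F : 𝓕,
      ∃ G : 𝓕, (∀ w ∈ U, toFun G w = ψ w • toFun F w) ∧ ‖G‖ = ‖F‖
  mem_of_smul : ∀ ψ, IsConfEquiv U ψ → ∀ F : 𝓕, ∀ g : ℂ → W, AnalyticOnNhd ℂ g U →
      (∀ w ∈ U, toFun F w = ψ w • g w) →
      ∃ G : 𝓕, (∀ w ∈ U, toFun G w = g w) ∧ ‖G‖ = ‖F‖

variable {U : Set ℂ} {W : Type*} [NormedAddCommGroup W] [NormedSpace ℂ W] [CompleteSpace W]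
  {𝓕 : Type*} [NormedAddCommGroup 𝓕] [NormedSpace ℂ 𝓕] [CompleteSpace 𝓕]

/-- The `i`-th Taylor coefficient `F̂[i] = F^{(i)}(z)/i!` of (the function represented by)
`F ∈ 𝓕` at the base point `z`. -/
def taylorCoeff (A : AdmissibleSpace U W 𝓕) (z : ℂ) (i : ℕ) (F : 𝓕) : W :=
  ((Nat.factorial i : ℂ))⁻¹ • iteratedDeriv i (A.toFun F) z

/-- The derived space `Z^(n)`, realized as the set of `n`-tuples of Taylor coefficients
(at the base point `z`) of functions of `𝓕`; the tuple `x` records the `i`-th Taylor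
coefficient in position `i`. -/
def Zset (A : AdmissibleSpace U W 𝓕) (z : ℂ) (n : ℕ) : Set (Fin n → W) :=
  {x | ∃ F : 𝓕, ∀ i : Fin n, taylorCoeff A z i F = x i}

/-- The (quotient) norm of the derived space `Z^(n)`. -/
def Znorm (A : AdmissibleSpace U W 𝓕) (z : ℂ) (n : ℕ) (x : Fin n → W) : ℝ :=
  sInf {c : ℝ | ∃ F : 𝓕, (∀ i : Fin n, taylorCoeff A z i F = x i) ∧ ‖F‖ = c}

/-- The "inclusion on the left" `ι_{n,m}`: in terms of Taylor indices, it shifts a tuple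
up by `m - n`, filling with zeros: `(ι x)_i = x_{i-(m-n)}` for `i ≥ m - n`, `0` otherwise. -/
def leftShift (W : Type*) [NormedAddCommGroup W] (n m : ℕ) (x : Fin n → W) : Fin m → W :=
  fun i => if h : m - n ≤ (i : ℕ) ∧ (i : ℕ) - (m - n) < n
    then x ⟨(i : ℕ) - (m - n), h.2⟩ else 0

/-- The "projection on the right" `π_{m,k}`: in terms of Taylor indices, it keeps the
coefficients of index `< k`. -/
def rightProj (W : Type*) [NormedAddCommGroup W] (m k : ℕ) (h : k ≤ m) (x : Fin m → W) :
    Fin k → W :=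
  fun i => x (Fin.castLE h i)

/-! On a closed disc around `w` inside `U`, the evaluations are uniformly bounded by
Banach–Steinhaus, since every function of `𝓕` is bounded on the disc; Cauchy's estimate then
bounds the `n`-th derivative at `w` by a constant times `‖F‖`. -/

section BoundedEvaluations

variable {𝕜 F : Type*} [NontriviallyNormedField 𝕜] [NormedAddCommGroup F] [NormedSpace 𝕜 F]

theorem LinearMap.exists_bound_on_compact_of_forall_eval_bound {E X : Type*}
    [NormedAddCommGroup E] [NormedSpace 𝕜 E] [CompleteSpace E] [TopologicalSpace X]
    (T : E →ₗ[𝕜] X → F) {K : Set X} (hK : IsCompact K)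
    (hcont : ∀ e, ContinuousOn (T e) K) (heval : ∀ x ∈ K, ∃ C, ∀ e, ‖T e x‖ ≤ C * ‖e‖) :
    ∃ C, ∀ e, ∀ x ∈ K, ‖T e x‖ ≤ C * ‖e‖ := by
  choose! C hC using heval
  let evalAt : K → E →L[𝕜] F := fun x =>
    ((LinearMap.proj (x : X)).comp T).mkContinuous (C x) (hC x x.2)
  obtain ⟨C', hC'⟩ := banach_steinhaus (g := evalAt) fun e => by
    obtain ⟨M, hM⟩ := hK.exists_bound_of_continuousOn (hcont e)
    exact ⟨M, fun x => hM x x.2⟩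
  exact ⟨C', fun e x hx => ((evalAt ⟨x, hx⟩).le_opNorm e).trans (by gcongr; exact hC' _)⟩

def LinearMap.iteratedDerivEval {E : Type*} [AddCommGroup E] [Module 𝕜 E]
    (T : E →ₗ[𝕜] 𝕜 → F) (n : ℕ) (x : 𝕜) (hT : ∀ e, ContDiffAt 𝕜 n (T e) x) : E →ₗ[𝕜] F where
  toFun e := iteratedDeriv n (T e) x
  map_add' e e' := by rw [map_add, iteratedDeriv_add (hT e) (hT e')]
  map_smul' c e := by rw [map_smul, iteratedDeriv_const_smul (hT e) c]; rfl

end BoundedEvaluations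

theorem AdmissibleSpace.derivEval_bounded_general (A : AdmissibleSpace U W 𝓕) :
    ∀ w ∈ U, ∀ n : ℕ, ∃ D : 𝓕 →L[ℂ] W, ∀ F : 𝓕, D F = iteratedDeriv n (A.toFun F) w := by
  intro w hw n
  obtain ⟨r, hr, hball⟩ : ∃ r > 0, closedBall w r ⊆ U :=
    nhds_basis_closedBall.mem_iff.mp (A.isOpen_U.mem_nhds hw)
  obtain ⟨C, hC⟩ := A.toFun.exists_bound_on_compact_of_forall_eval_bound
    (isCompact_closedBall w r) (fun F => (A.analyticOn F).continuousOn.mono hball)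
    (fun x hx => A.eval_bound x (hball hx))
  let D := A.toFun.iteratedDerivEval n w fun F => (A.analyticOn F w hw).contDiffAt
  refine ⟨D.mkContinuous (n.factorial * C / r ^ n) fun F => ?_, fun F => rfl⟩
  calc ‖D F‖ ≤ n.factorial * (C * ‖F‖) / r ^ n :=
        Complex.norm_iteratedDeriv_le_of_forall_mem_sphere_norm_le n hr
          ((A.analyticOn F).differentiableOn.diffContOnCl_ball hball)
          fun z hz => hC F z (sphere_subset_closedBall hz)
    _ = n.factorial * C / r ^ n * ‖F‖ := by ring

/-- **Boundedness of derivative evaluations on an admissible space.**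
If `𝓕` is an admissible space of analytic functions from `U` to `W` (with base point
`z ∈ U`), then for every `w ∈ U` and every `n ≥ 0` the linear map `𝓕 → W`,
`F ↦ F^{(n)}(w)`, is bounded. -/
theorem AdmissibleSpace.derivEval_bounded (A : AdmissibleSpace U W 𝓕) (z : ℂ) (hz : z ∈ U) :
    ∀ w ∈ U, ∀ n : ℕ, ∃ D : 𝓕 →L[ℂ] W, ∀ F : 𝓕, D F = iteratedDeriv n (A.toFun F) w :=
  AdmissibleSpace.derivEval_bounded_general A

end
end

section
/- Let 𝓕 be an admissible space of analytic functions from U to W with base point z ∈ U, and let 1 ≤ n < m be integers, k = m − n. Then there is a constant M (depending only on 𝓕, z, n, m) such that for every F ∈ 𝓕 there exists G ∈ 𝓕 with ‖G‖_𝓕 ≤ M‖F‖_𝓕, Ĝ[i] = 0 for all 0 ≤ i < k, and Ĝ[i] = F̂[i−k] for all k ≤ i < m. Consequently, the left-shift map ι_{n,m} : (x_{n−1},…,x_0) ↦ (x_{n−1},…,x_0,0,…,0) maps Z^(n) into Z^(m) and is a bounded linear operator Z^(n) → Z^(m). -/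
/-!
Fix a conformal equivalence `ψ : U → 𝔻`. Multiplication by `ψ` is an isometry of `𝓕`, so
multiplication by any polynomial in `ψ` is bounded on `𝓕`. Since `ψ'(z) ≠ 0`, the Taylor
coefficients at `z` of the powers `(ψ - ψ(z))^s`, `s < m`, form a lower triangular matrix with
nonzero diagonal; inverting it gives a polynomial `h` in `ψ` whose first `m` Taylor coefficients at
`z` are those of `(w - z)^k`. By the Leibniz rule `G = h • F` then has `Ĝ[i] = F̂[i - k]` for
`k ≤ i < m` and `Ĝ[i] = 0` for `i < k`, and the bound on the quotient norms follows by taking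
infima.
-/

open Metric Filter

noncomputable section

variable {U : Set ℂ} {W : Type*} [NormedAddCommGroup W] [NormedSpace ℂ W] [CompleteSpace W]
  {𝓕 : Type*} [NormedAddCommGroup 𝓕] [NormedSpace ℂ 𝓕] [CompleteSpace 𝓕]

open Finset Topology

section TaylorCoefficients

variable {V : Type*} [NormedAddCommGroup V] [NormedSpace ℂ V]

def taylorCoeffAt (f : ℂ → V) (z : ℂ) (i : ℕ) : V :=
  ((i.factorial : ℂ))⁻¹ • iteratedDeriv i f z

@[simp]
lemma taylorCoeffAt_zero (f : ℂ → V) (z : ℂ) : taylorCoeffAt f z 0 = f z := by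
  simp [taylorCoeffAt]

@[simp]
lemma taylorCoeffAt_one (f : ℂ → V) (z : ℂ) : taylorCoeffAt f z 1 = deriv f z := by
  simp [taylorCoeffAt]

lemma Filter.EventuallyEq.taylorCoeffAt_eq {f g : ℂ → V} {z : ℂ} (h : f =ᶠ[𝓝 z] g) (i : ℕ) :
    taylorCoeffAt f z i = taylorCoeffAt g z i := by
  rw [taylorCoeffAt, taylorCoeffAt, h.iteratedDeriv_eq]

lemma taylorCoeffAt_fun_sum {ι : Type*} {t : Finset ι} {f : ι → ℂ → V} {z : ℂ} {i : ℕ}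
    (hf : ∀ s ∈ t, ContDiffAt ℂ i (f s) z) :
    taylorCoeffAt (fun w => ∑ s ∈ t, f s w) z i = ∑ s ∈ t, taylorCoeffAt (f s) z i := by
  rw [taylorCoeffAt, iteratedDeriv_fun_sum hf, smul_sum]
  rfl

lemma taylorCoeffAt_const_mul (c : ℂ) (f : ℂ → ℂ) (z : ℂ) (i : ℕ) :
    taylorCoeffAt (fun w => c * f w) z i = c * taylorCoeffAt f z i := by
  simp only [taylorCoeffAt, iteratedDeriv_const_mul_field, smul_eq_mul]
  ring

lemma taylorCoeffAt_smul {h : ℂ → ℂ} {f : ℂ → V} {z : ℂ} {i : ℕ}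
    (hh : ContDiffAt ℂ i h z) (hf : ContDiffAt ℂ i f z) :
    taylorCoeffAt (fun w => h w • f w) z i =
      ∑ p ∈ antidiagonal i, taylorCoeffAt h z p.1 • taylorCoeffAt f z p.2 := by
  have leibniz := iteratedDerivWithin_smul (Set.mem_univ z) uniqueDiffOn_univ
    hh.contDiffWithinAt hf.contDiffWithinAt
  simp only [iteratedDerivWithin_univ] at leibniz
  rw [taylorCoeffAt, show (fun w => h w • f w) = h • f from rfl, leibniz, smul_sum,
    Nat.sum_antidiagonal_eq_sum_range_succ_mk]
  refine sum_congr rfl fun j hj => ?_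
  have hji : j ≤ i := Nat.lt_succ_iff.mp (mem_range.mp hj)
  rw [taylorCoeffAt, taylorCoeffAt, ← Nat.cast_smul_eq_nsmul ℂ, smul_smul, smul_smul_smul_comm,
    Nat.cast_choose ℂ hji]
  congr 1
  rw [smul_eq_mul, inv_mul_eq_div, div_div_cancel_left' (Nat.cast_ne_zero.2 i.factorial_ne_zero),
    mul_inv]

lemma taylorCoeffAt_smul_of_taylorCoeffAt_eq_ite {h : ℂ → ℂ} {f : ℂ → V} {z : ℂ} {m k i : ℕ}
    (hh : ContDiffAt ℂ i h z) (hf : ContDiffAt ℂ i f z)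
    (hh_coeff : ∀ j < m, taylorCoeffAt h z j = if j = k then 1 else 0) (hi : i < m) :
    taylorCoeffAt (fun w => h w • f w) z i = if k ≤ i then taylorCoeffAt f z (i - k) else 0 := by
  rw [taylorCoeffAt_smul hh hf, Nat.sum_antidiagonal_eq_sum_range_succ_mk]
  calc ∑ j ∈ range (i + 1), taylorCoeffAt h z j • taylorCoeffAt f z (i - j)
      = ∑ j ∈ range (i + 1), if k = j then taylorCoeffAt f z (i - j) else 0 := by
        refine sum_congr rfl fun j hj => ?_
        rw [hh_coeff j (by grind)]
        rcases eq_or_ne j k with rfl | hjk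
        · simp
        · simp [hjk, hjk.symm]
    _ = if k ≤ i then taylorCoeffAt f z (i - k) else 0 := by
        simp [sum_ite_eq]

end TaylorCoefficients

section Jets

variable {φ : ℂ → ℂ} {z : ℂ}

lemma taylorCoeffAt_pow (hφ : AnalyticAt ℂ φ z) (h0 : φ z = 0) {s r : ℕ} (hr : r ≤ s) :
    taylorCoeffAt (fun w => φ w ^ s) z r = if r = s then deriv φ z ^ s else 0 := by
  induction s generalizing r with
  | zero => simp [Nat.le_zero.mp hr]
  | succ s ih =>
    rcases r with _ | r
    · simp [h0]
    have hpow : (fun w => φ w ^ (s + 1)) = fun w => φ w • φ w ^ s := by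
      funext w; rw [smul_eq_mul, pow_succ']
    rw [hpow, taylorCoeffAt_smul (f := fun w => φ w ^ s) hφ.contDiffAt (hφ.pow s).contDiffAt,
      Nat.sum_antidiagonal_succ, taylorCoeffAt_zero, h0, zero_smul, zero_add,
      sum_eq_single (0, r)]
    · rw [ih (by omega), smul_eq_mul, taylorCoeffAt_one]
      split_ifs <;> first | omega | ring
    · rintro ⟨a, b⟩ hab hne
      rw [HasAntidiagonal.mem_antidiagonal] at hab
      rw [ih (by omega), if_neg (by grind), smul_zero]
    · simp

theorem exists_taylorCoeffAt_sum_mul_pow_eq (hφ : AnalyticAt ℂ φ z) (h0 : φ z = 0)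
    (hd : deriv φ z ≠ 0) {m : ℕ} (v : Fin m → ℂ) :
    ∃ b : Fin m → ℂ, ∀ j : Fin m,
      taylorCoeffAt (fun w => ∑ s, b s * φ w ^ (s : ℕ)) z j = v j := by
  set P : Matrix (Fin m) (Fin m) ℂ :=
    Matrix.of fun r s => taylorCoeffAt (fun w => φ w ^ (s : ℕ)) z r
  have hP : P.IsLowerTriangular := fun r s (hrs : r < s) => by
    simp only [P, Matrix.of_apply, taylorCoeffAt_pow hφ h0 hrs.le,
      if_neg (Fin.val_ne_of_ne hrs.ne)]
  have hdet : P.det ≠ 0 := by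
    rw [Matrix.det_of_isLowerTriangular P hP]
    exact prod_ne_zero_iff.2 fun s _ => by simp [P, taylorCoeffAt_pow hφ h0 le_rfl, hd]
  obtain ⟨b, hb⟩ := Matrix.mulVec_surjective_iff_isUnit.2
    ((Matrix.isUnit_iff_isUnit_det P).2 hdet.isUnit) v
  refine ⟨b, fun j => ?_⟩
  rw [taylorCoeffAt_fun_sum (f := fun s w => b s * φ w ^ (s : ℕ))
    fun s _ => (analyticAt_const.mul (hφ.pow _)).contDiffAt, ← hb]
  simp [P, Matrix.mulVec, dotProduct, taylorCoeffAt_const_mul, mul_comm]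

end Jets

lemma IsConfEquiv.deriv_ne_zero {ψ : ℂ → ℂ} (hψ : IsConfEquiv U ψ) (hU : IsOpen U) {z : ℂ}
    (hz : z ∈ U) : deriv ψ z ≠ 0 := by
  obtain ⟨ψi, hψa, hψm, hψia, -, hleft, -⟩ := hψ
  have hcomp : ψi ∘ ψ =ᶠ[𝓝 z] id :=
    Filter.eventually_of_mem (hU.mem_nhds hz) hleft
  have hchain := deriv_comp z (hψia (ψ z) (hψm hz)).differentiableAt (hψa z hz).differentiableAt
  rw [hcomp.deriv_eq, deriv_id] at hchain
  exact right_ne_zero_of_mul_eq_one hchain.symm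

namespace AdmissibleSpace

variable (A : AdmissibleSpace U W 𝓕)

def IsMultiplier (h : ℂ → ℂ) (C : ℝ) : Prop :=
  ∀ F : 𝓕, ∃ G : 𝓕, (∀ w ∈ U, A.toFun G w = h w • A.toFun F w) ∧ ‖G‖ ≤ C * ‖F‖

variable {A}

lemma isMultiplier_of_isConfEquiv {ψ : ℂ → ℂ} (hψ : IsConfEquiv U ψ) : A.IsMultiplier ψ 1 :=
  fun F => (A.smul_mem ψ hψ F).imp fun _ ⟨hG, hnorm⟩ => ⟨hG, by rw [hnorm, one_mul]⟩

lemma isMultiplier_const (c : ℂ) : A.IsMultiplier (fun _ => c) ‖c‖ :=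
  fun F => ⟨c • F, fun w _ => by simp, (norm_smul c F).le⟩

lemma IsMultiplier.add {h₁ h₂ : ℂ → ℂ} {C₁ C₂ : ℝ} (hm₁ : A.IsMultiplier h₁ C₁)
    (hm₂ : A.IsMultiplier h₂ C₂) : A.IsMultiplier (fun w => h₁ w + h₂ w) (C₁ + C₂) := by
  intro F
  obtain ⟨G₁, hG₁, hn₁⟩ := hm₁ F
  obtain ⟨G₂, hG₂, hn₂⟩ := hm₂ F
  refine ⟨G₁ + G₂, fun w hw => by simp [hG₁ w hw, hG₂ w hw, add_smul], ?_⟩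
  calc ‖G₁ + G₂‖ ≤ ‖G₁‖ + ‖G₂‖ := norm_add_le _ _
    _ ≤ (C₁ + C₂) * ‖F‖ := by linarith

lemma IsMultiplier.sub {h₁ h₂ : ℂ → ℂ} {C₁ C₂ : ℝ} (hm₁ : A.IsMultiplier h₁ C₁)
    (hm₂ : A.IsMultiplier h₂ C₂) : A.IsMultiplier (fun w => h₁ w - h₂ w) (C₁ + C₂) := by
  intro F
  obtain ⟨G₁, hG₁, hn₁⟩ := hm₁ F
  obtain ⟨G₂, hG₂, hn₂⟩ := hm₂ F
  refine ⟨G₁ - G₂, fun w hw => by simp [hG₁ w hw, hG₂ w hw, sub_smul], ?_⟩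
  calc ‖G₁ - G₂‖ ≤ ‖G₁‖ + ‖G₂‖ := norm_sub_le _ _
    _ ≤ (C₁ + C₂) * ‖F‖ := by linarith

lemma IsMultiplier.mul {h₁ h₂ : ℂ → ℂ} {C₁ C₂ : ℝ} (hm₁ : A.IsMultiplier h₁ C₁)
    (hm₂ : A.IsMultiplier h₂ C₂) (hC₁ : 0 ≤ C₁) :
    A.IsMultiplier (fun w => h₁ w * h₂ w) (C₁ * C₂) := by
  intro F
  obtain ⟨G₂, hG₂, hn₂⟩ := hm₂ F
  obtain ⟨G, hG, hn⟩ := hm₁ G₂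
  refine ⟨G, fun w hw => by rw [hG w hw, hG₂ w hw, smul_smul], ?_⟩
  calc ‖G‖ ≤ C₁ * ‖G₂‖ := hn
    _ ≤ C₁ * (C₂ * ‖F‖) := mul_le_mul_of_nonneg_left hn₂ hC₁
    _ = C₁ * C₂ * ‖F‖ := (mul_assoc _ _ _).symm

lemma IsMultiplier.pow {h : ℂ → ℂ} {C : ℝ} (hm : A.IsMultiplier h C) (hC : 0 ≤ C) (s : ℕ) :
    A.IsMultiplier (fun w => h w ^ s) (C ^ s) := by
  induction s with
  | zero => simpa using isMultiplier_const (A := A) 1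
  | succ s ih => simpa only [pow_succ'] using hm.mul ih hC

lemma IsMultiplier.sum {ι : Type*} (t : Finset ι) {h : ι → ℂ → ℂ} {C : ι → ℝ}
    (hm : ∀ s ∈ t, A.IsMultiplier (h s) (C s)) :
    A.IsMultiplier (fun w => ∑ s ∈ t, h s w) (∑ s ∈ t, C s) := by
  classical
  induction t using Finset.induction_on with
  | empty => simpa using isMultiplier_const (A := A) 0
  | insert s t hs ih =>
    simp only [sum_insert hs]
    exact (hm s (mem_insert_self s t)).add (ih fun s' hs' => hm s' (mem_insert_of_mem hs'))

variable (A)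

lemma taylorCoeff_eq_taylorCoeffAt (z : ℂ) (i : ℕ) (F : 𝓕) :
    taylorCoeff A z i F = taylorCoeffAt (A.toFun F) z i :=
  rfl

theorem exists_taylorCoeff_shift {z : ℂ} (hz : z ∈ U) (k m : ℕ) :
    ∃ M : ℝ, 0 ≤ M ∧ ∀ F : 𝓕, ∃ G : 𝓕, ‖G‖ ≤ M * ‖F‖ ∧ ∀ i < m,
      taylorCoeff A z i G = if k ≤ i then taylorCoeff A z (i - k) F else 0 := by
  obtain ⟨ψ, hψ⟩ := A.conf
  obtain ⟨-, hψa, -⟩ := id hψ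
  have hφa : AnalyticAt ℂ (fun w => ψ w - ψ z) z := (hψa z hz).sub analyticAt_const
  obtain ⟨b, hb⟩ := exists_taylorCoeffAt_sum_mul_pow_eq hφa (sub_self _)
    (by rw [deriv_sub_const]; exact hψ.deriv_ne_zero A.isOpen_U hz)
    (fun j : Fin m => if (j : ℕ) = k then 1 else 0)
  set h : ℂ → ℂ := fun w => ∑ s, b s * (ψ w - ψ z) ^ (s : ℕ)
  have hmul : A.IsMultiplier h (∑ s : Fin m, ‖b s‖ * (1 + ‖ψ z‖) ^ (s : ℕ)) :=
    IsMultiplier.sum _ fun s _ => (isMultiplier_const (b s)).mul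
      (((isMultiplier_of_isConfEquiv hψ).sub (isMultiplier_const _)).pow (by positivity) _)
      (norm_nonneg _)
  refine ⟨∑ s : Fin m, ‖b s‖ * (1 + ‖ψ z‖) ^ (s : ℕ), by positivity, fun F => ?_⟩
  obtain ⟨G, hG, hGF⟩ := hmul F
  refine ⟨G, hGF, fun i hi => ?_⟩
  have hhG : A.toFun G =ᶠ[𝓝 z] fun w => h w • A.toFun F w :=
    Filter.eventually_of_mem (A.isOpen_U.mem_nhds hz) hG
  rw [taylorCoeff_eq_taylorCoeffAt, hhG.taylorCoeffAt_eq]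
  refine taylorCoeffAt_smul_of_taylorCoeffAt_eq_ite ?_ (A.analyticOn F z hz).contDiffAt
    (fun j hj => hb ⟨j, hj⟩) hi
  exact (Finset.analyticAt_fun_sum _ fun s _ => analyticAt_const.mul (hφa.pow _)).contDiffAt

lemma Znorm_le_mul_of_forall_exists {z : ℂ} {n m : ℕ} {x : Fin n → W} {y : Fin m → W} {M : ℝ}
    (hx : x ∈ Zset A z n) (hM : 0 ≤ M)
    (hlift : ∀ F : 𝓕, (∀ i : Fin n, taylorCoeff A z i F = x i) →
      ∃ G : 𝓕, (∀ i : Fin m, taylorCoeff A z i G = y i) ∧ ‖G‖ ≤ M * ‖F‖) :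
    Znorm A z m y ≤ M * Znorm A z n x := by
  obtain ⟨F₀, hF₀⟩ := hx
  have hbdd : BddBelow {c | ∃ G : 𝓕, (∀ i : Fin m, taylorCoeff A z i G = y i) ∧ ‖G‖ = c} :=
    ⟨0, by rintro _ ⟨G, -, rfl⟩; exact norm_nonneg G⟩
  rw [Znorm, Znorm, ← smul_eq_mul, ← Real.sInf_smul_of_nonneg hM]
  refine le_csInf (Set.Nonempty.smul_set ⟨‖F₀‖, F₀, hF₀, rfl⟩) ?_
  rintro _ ⟨_, ⟨F, hF, rfl⟩, rfl⟩
  obtain ⟨G, hG, hGF⟩ := hlift F hF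
  exact (csInf_le hbdd ⟨G, hG, rfl⟩).trans hGF

end AdmissibleSpace

theorem AdmissibleSpace.leftShift_bounded_general (A : AdmissibleSpace U W 𝓕) (z : ℂ) (hz : z ∈ U)
    (n m : ℕ) :
    ∃ M : ℝ,
      (∀ F : 𝓕, ∃ G : 𝓕, ‖G‖ ≤ M * ‖F‖ ∧
        (∀ i : ℕ, i < m - n → taylorCoeff A z i G = 0) ∧
        (∀ i : ℕ, m - n ≤ i → i < m → taylorCoeff A z i G = taylorCoeff A z (i - (m - n)) F)) ∧
      (∀ x ∈ Zset A z n, leftShift W n m x ∈ Zset A z m ∧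
        Znorm A z m (leftShift W n m x) ≤ M * Znorm A z n x) := by
  obtain ⟨M, hM, hshift⟩ := A.exists_taylorCoeff_shift hz (m - n) m
  have hlift (x : Fin n → W) (F : 𝓕) (hF : ∀ i : Fin n, taylorCoeff A z i F = x i) :
      ∃ G : 𝓕, (∀ i : Fin m, taylorCoeff A z i G = leftShift W n m x i) ∧ ‖G‖ ≤ M * ‖F‖ := by
    obtain ⟨G, hGF, hG⟩ := hshift F
    refine ⟨G, fun i => ?_, hGF⟩
    rw [hG i i.isLt, leftShift]
    by_cases hi : m - n ≤ (i : ℕ)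
    · rw [if_pos hi, dif_pos ⟨hi, by omega⟩, ← hF]
    · rw [if_neg hi, dif_neg (by tauto)]
  refine ⟨M, fun F => ?_, fun x hx => ⟨?_, A.Znorm_le_mul_of_forall_exists hx hM (hlift x)⟩⟩
  · obtain ⟨G, hGF, hG⟩ := hshift F
    exact ⟨G, hGF, fun i hi => by rw [hG i (by omega), if_neg (by omega)],
      fun i hi hm => by rw [hG i hm, if_pos hi]⟩
  · obtain ⟨F, hF⟩ := hx
    obtain ⟨G, hG, -⟩ := hlift x F hF
    exact ⟨G, hG⟩

/-- **The left inclusion `ι_{n,m} : Z^(n) → Z^(m)` is bounded.**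
Let `𝓕` be an admissible space of analytic functions with base point `z ∈ U` and
`1 ≤ n < m`, `k = m - n`. There is a constant `M` such that every `F ∈ 𝓕` admits `G ∈ 𝓕`
with `‖G‖ ≤ M‖F‖`, `Ĝ[i] = 0` for `i < k` and `Ĝ[i] = F̂[i-k]` for `k ≤ i < m`.
Consequently the left shift `ι_{n,m}` maps `Z^(n)` into `Z^(m)` boundedly. -/
theorem AdmissibleSpace.leftShift_bounded (A : AdmissibleSpace U W 𝓕) (z : ℂ) (hz : z ∈ U)
    (n m : ℕ) (hn : 1 ≤ n) (hm : n < m) :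
    ∃ M : ℝ,
      (∀ F : 𝓕, ∃ G : 𝓕, ‖G‖ ≤ M * ‖F‖ ∧
        (∀ i : ℕ, i < m - n → taylorCoeff A z i G = 0) ∧
        (∀ i : ℕ, m - n ≤ i → i < m → taylorCoeff A z i G = taylorCoeff A z (i - (m - n)) F)) ∧
      (∀ x ∈ Zset A z n, leftShift W n m x ∈ Zset A z m ∧
        Znorm A z m (leftShift W n m x) ≤ M * Znorm A z n x) :=
  AdmissibleSpace.leftShift_bounded_general A z hz n m

end
end

section
/- Let 𝓕 be an admissible space of analytic functions from U to W with base point z ∈ U, let φ : U → 𝔻 be a conformal equivalence with φ(z) = 0, and let k ≥ 1. If x ∈ W is such that (x,0,…,0) ∈ Z^(k+1) (the tuple with first entry x followed by k zeros), then x ∈ Z^(1), and moreover ‖x‖_{Z^(1)} ≤ |φ′(z)|^k · ‖(x,0,…,0)‖_{Z^(k+1)}. -/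
/-!
Since `φ` has a simple zero at `z` and no other zero in `U`, every analytic `h` on `U` with
`h z = 0` is `φ • g` for an analytic `g`, and admissibility puts `g` in `𝓕` with `‖g‖ = ‖h‖`.
If `F ∈ 𝓕` has Taylor coefficients `(0, …, 0, x)` at `z`, dividing `k` times gives
`F = φ ^ k • G` with `‖G‖ = ‖F‖`, and comparing `k`-th Taylor coefficients gives
`x = φ'(z) ^ k • G z`. Hence `φ'(z) ^ k • G` represents `x` in `Z^(1)` with norm
`|φ'(z)| ^ k ‖F‖`.
-/

open Metric Filter

noncomputable section

variable {U : Set ℂ} {W : Type*} [NormedAddCommGroup W] [NormedSpace ℂ W] [CompleteSpace W]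
  {𝓕 : Type*} [NormedAddCommGroup 𝓕] [NormedSpace ℂ 𝓕] [CompleteSpace 𝓕]

open scoped Topology

section TaylorCoefficients

variable {𝕜 : Type*} [NontriviallyNormedField 𝕜] {E : Type*} [NormedAddCommGroup E]
  [NormedSpace 𝕜 E] {f : 𝕜 → E} {z : 𝕜}

theorem HasFPowerSeriesAt.factorial_inv_smul_iteratedDeriv [CharZero 𝕜] [CompleteSpace E]
    {p : FormalMultilinearSeries 𝕜 𝕜 E} (hp : HasFPowerSeriesAt f p z) (n : ℕ) :
    (n.factorial : 𝕜)⁻¹ • iteratedDeriv n f z = p.coeff n := by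
  obtain ⟨r, hr⟩ := hp
  rw [iteratedDeriv, ← hr.factorial_smul 1 n, ← Nat.cast_smul_eq_nsmul 𝕜,
    inv_smul_smul₀ (by exact_mod_cast n.factorial_ne_zero)]
  rfl

theorem AnalyticAt.factorial_inv_smul_iteratedDeriv_succ [CharZero 𝕜] [CompleteSpace E]
    (hf : AnalyticAt 𝕜 f z) (n : ℕ) :
    ((n + 1).factorial : 𝕜)⁻¹ • iteratedDeriv (n + 1) f z =
      (n.factorial : 𝕜)⁻¹ • iteratedDeriv n (dslope f z) z := by
  obtain ⟨p, hp⟩ := hf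
  rw [hp.factorial_inv_smul_iteratedDeriv,
    hp.has_fpower_series_dslope_fslope.factorial_inv_smul_iteratedDeriv,
    FormalMultilinearSeries.coeff_fslope]

theorem dslope_eventuallyEq_of_eventuallyEq_sub_smul {g : 𝕜 → E} (hg : DifferentiableAt 𝕜 g z)
    (hf : f =ᶠ[𝓝 z] fun w => (w - z) • g w) : dslope f z =ᶠ[𝓝 z] g := by
  have hfz : f z = 0 := by simpa using hf.self_of_nhds
  filter_upwards [hf] with w hw
  obtain rfl | hwz := eq_or_ne w z
  · rw [dslope_same, hf.deriv_eq]
    simpa using ((hasDerivAt_id w).sub_const w).fun_smul hg.hasDerivAt |>.deriv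
  · rw [dslope_of_ne _ hwz, slope_def_module, hw, hfz, sub_zero,
      inv_smul_smul₀ (sub_ne_zero.2 hwz)]

theorem factorial_inv_smul_iteratedDeriv_of_eventuallyEq_sub_pow_smul [CharZero 𝕜]
    [CompleteSpace E] {s : 𝕜 → E} (hs : AnalyticAt 𝕜 s z) {n : ℕ}
    (hf : f =ᶠ[𝓝 z] fun w => (w - z) ^ n • s w) :
    (n.factorial : 𝕜)⁻¹ • iteratedDeriv n f z = s z := by
  induction n generalizing f with
  | zero => simpa using hf.self_of_nhds
  | succ n ih =>
    have hg : AnalyticAt 𝕜 (fun w => (w - z) ^ n • s w) z := by fun_prop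
    have hf' : f =ᶠ[𝓝 z] fun w => (w - z) • (w - z) ^ n • s w := by
      simpa only [pow_succ', mul_smul] using hf
    have hf_an : AnalyticAt 𝕜 f z :=
      (analyticAt_id.sub analyticAt_const |>.smul hg).congr hf'.symm
    rw [hf_an.factorial_inv_smul_iteratedDeriv_succ]
    exact ih (dslope_eventuallyEq_of_eventuallyEq_sub_smul hg.differentiableAt hf')

theorem factorial_inv_smul_iteratedDeriv_of_eventuallyEq_pow_smul [CharZero 𝕜]
    [CompleteSpace E] {φ : 𝕜 → 𝕜} {g : 𝕜 → E} (hφ : AnalyticAt 𝕜 φ z) (hφz : φ z = 0)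
    (hg : AnalyticAt 𝕜 g z) {n : ℕ} (hf : f =ᶠ[𝓝 z] fun w => φ w ^ n • g w) :
    (n.factorial : 𝕜)⁻¹ • iteratedDeriv n f z = deriv φ z ^ n • g z := by
  obtain ⟨p, hp⟩ := hφ
  have hq : AnalyticAt 𝕜 (dslope φ z) z := ⟨_, hp.has_fpower_series_dslope_fslope⟩
  rw [← dslope_same φ z]
  refine factorial_inv_smul_iteratedDeriv_of_eventuallyEq_sub_pow_smul
    (s := fun w => dslope φ z w ^ n • g w) (by fun_prop) ?_
  filter_upwards [hf] with w hw
  rw [hw, ← sub_smul_dslope_of_zero hφz w, smul_eq_mul, mul_pow, mul_smul]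

end TaylorCoefficients

section Division

variable {E : Type*} [NormedAddCommGroup E] [NormedSpace ℂ E] [CompleteSpace E] {U : Set ℂ}
  {z : ℂ}

theorem AnalyticOnNhd.dslope {f : ℂ → E} (hU : IsOpen U) (hz : z ∈ U)
    (hf : AnalyticOnNhd ℂ f U) : AnalyticOnNhd ℂ (dslope f z) U := by
  rw [Complex.analyticOnNhd_iff_differentiableOn hU] at hf ⊢
  exact (Complex.differentiableOn_dslope (hU.mem_nhds hz)).2 hf

theorem exists_analyticOnNhd_eq_smul_of_eq_zero {φ : ℂ → ℂ} {h : ℂ → E} (hU : IsOpen U)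
    (hz : z ∈ U) (hφ : AnalyticOnNhd ℂ φ U) (hφz : φ z = 0) (hφ' : deriv φ z ≠ 0)
    (hφU : ∀ w ∈ U, φ w = 0 → w = z) (hh : AnalyticOnNhd ℂ h U) (hhz : h z = 0) :
    ∃ g : ℂ → E, AnalyticOnNhd ℂ g U ∧ ∀ w ∈ U, h w = φ w • g w := by
  have hq : ∀ w ∈ U, dslope φ z w ≠ 0 := by
    intro w hw hw0
    obtain rfl := hφU w hw (by rw [← sub_smul_dslope_of_zero hφz w, hw0, smul_zero])
    exact hφ' (by rwa [dslope_same] at hw0)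
  refine ⟨fun w => (dslope φ z w)⁻¹ • dslope h z w,
    fun w hw => ((hφ.dslope hU hz w hw).inv (hq w hw)).smul (hh.dslope hU hz w hw),
    fun w hw => ?_⟩
  rw [← sub_smul_dslope_of_zero hφz w, ← sub_smul_dslope_of_zero hhz w, smul_eq_mul, mul_smul,
    smul_inv_smul₀ (hq w hw)]

end Division

namespace IsConfEquiv

variable {φ : ℂ → ℂ}

theorem analyticOnNhd (hφ : IsConfEquiv U φ) : AnalyticOnNhd ℂ φ U := by
  obtain ⟨-, hφa, -⟩ := hφ
  exact hφa

theorem injOn (hφ : IsConfEquiv U φ) : Set.InjOn φ U := by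
  obtain ⟨ψ, -, -, -, -, hψφ, -⟩ := hφ
  exact Set.LeftInvOn.injOn hψφ

theorem deriv_ne_zero_s7 (hU : IsOpen U) (hφ : IsConfEquiv U φ) {z : ℂ} (hz : z ∈ U) :
    deriv φ z ≠ 0 := by
  obtain ⟨ψ, hφa, hφU, hψa, -, hψφ, -⟩ := hφ
  have hid : ψ ∘ φ =ᶠ[𝓝 z] id := by
    filter_upwards [hU.mem_nhds hz] using hψφ
  have hchain : deriv ψ (φ z) * deriv φ z = 1 := by
    rw [← deriv_comp z (hψa _ (hφU hz)).differentiableAt (hφa z hz).differentiableAt,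
      hid.deriv_eq, deriv_id]
  exact right_ne_zero_of_mul_eq_one hchain

end IsConfEquiv

namespace AdmissibleSpace

variable (A : AdmissibleSpace U W 𝓕) {z : ℂ} {φ : ℂ → ℂ}

theorem taylorCoeff_eq_of_eqOn_pow_smul (hz : z ∈ U) (hφ : AnalyticAt ℂ φ z) (hφz : φ z = 0)
    {n : ℕ} {F G : 𝓕} (hFG : ∀ w ∈ U, A.toFun F w = φ w ^ n • A.toFun G w) :
    taylorCoeff A z n F = deriv φ z ^ n • A.toFun G z :=
  factorial_inv_smul_iteratedDeriv_of_eventuallyEq_pow_smul hφ hφz (A.analyticOn G z hz)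
    (Filter.eventually_of_mem (A.isOpen_U.mem_nhds hz) hFG)

theorem exists_eqOn_pow_smul_of_taylorCoeff_eq_zero (hz : z ∈ U) (hφ : IsConfEquiv U φ)
    (hφz : φ z = 0) {k : ℕ} {F : 𝓕} (hF : ∀ i < k, taylorCoeff A z i F = 0) :
    ∃ G : 𝓕, ‖G‖ = ‖F‖ ∧ ∀ w ∈ U, A.toFun F w = φ w ^ k • A.toFun G w := by
  induction k with
  | zero => exact ⟨F, rfl, fun w _ => by rw [pow_zero, one_smul]⟩
  | succ k ih =>
    obtain ⟨G, hGF, hFG⟩ := ih fun i hi => hF i (hi.trans k.lt_succ_self)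
    have hGz : A.toFun G z = 0 := by
      have hk := hF k k.lt_succ_self
      rw [A.taylorCoeff_eq_of_eqOn_pow_smul hz (hφ.analyticOnNhd z hz) hφz hFG] at hk
      exact (smul_eq_zero.1 hk).resolve_left
        (pow_ne_zero k (hφ.deriv_ne_zero_s7 A.isOpen_U hz))
    obtain ⟨g, hg, hGg⟩ := exists_analyticOnNhd_eq_smul_of_eq_zero A.isOpen_U hz
      hφ.analyticOnNhd hφz (hφ.deriv_ne_zero_s7 A.isOpen_U hz)
      (fun w hw h0 => hφ.injOn hw hz (h0.trans hφz.symm)) (A.analyticOn G) hGz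
    obtain ⟨G', hG'g, hG'G⟩ := A.mem_of_smul φ hφ G g hg hGg
    refine ⟨G', hG'G.trans hGF, fun w hw => ?_⟩
    rw [hFG w hw, hGg w hw, hG'g w hw, pow_succ, mul_smul]

theorem Znorm_le_norm {n : ℕ} {x : Fin n → W} {F : 𝓕}
    (hF : ∀ i : Fin n, taylorCoeff A z i F = x i) : Znorm A z n x ≤ ‖F‖ :=
  csInf_le ⟨0, by rintro _ ⟨G, -, rfl⟩; exact norm_nonneg G⟩ ⟨F, hF, rfl⟩

theorem mem_Zset_and_Znorm_le_of_forall_exists {n m : ℕ} {x : Fin n → W} {y : Fin m → W}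
    {c : ℝ} (hx : x ∈ Zset A z n) (hc : 0 ≤ c)
    (h : ∀ F : 𝓕, (∀ i : Fin n, taylorCoeff A z i F = x i) →
      ∃ G : 𝓕, (∀ i : Fin m, taylorCoeff A z i G = y i) ∧ ‖G‖ ≤ c * ‖F‖) :
    y ∈ Zset A z m ∧ Znorm A z m y ≤ c * Znorm A z n x := by
  obtain ⟨F, hF⟩ := hx
  refine ⟨(h F hF).imp fun G hG => hG.1, ?_⟩
  rw [Znorm.eq_1 A z n x, ← smul_eq_mul, ← Real.sInf_smul_of_nonneg hc]
  refine le_csInf ⟨_, Set.smul_mem_smul_set ⟨F, hF, rfl⟩⟩ ?_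
  rintro _ ⟨_, ⟨F', hF', rfl⟩, rfl⟩
  obtain ⟨G, hG, hGF'⟩ := h F' hF'
  exact (A.Znorm_le_norm hG).trans hGF'

end AdmissibleSpace

theorem AdmissibleSpace.mem_Z1_of_corner_general (A : AdmissibleSpace U W 𝓕) (z : ℂ) (hz : z ∈ U)
    (φ : ℂ → ℂ) (hφ : IsConfEquiv U φ) (hz0 : φ z = 0) (k : ℕ) (x : W)
    (hx : (fun i : Fin (k + 1) => if (i : ℕ) = k then x else 0) ∈ Zset A z (k + 1)) :
    ((fun _ : Fin 1 => x) ∈ Zset A z 1) ∧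
      Znorm A z 1 (fun _ : Fin 1 => x) ≤
        ‖deriv φ z‖ ^ k *
          Znorm A z (k + 1) (fun i : Fin (k + 1) => if (i : ℕ) = k then x else 0) := by
  refine A.mem_Zset_and_Znorm_le_of_forall_exists hx (by positivity) fun F hF => ?_
  obtain ⟨G, hGF, hFG⟩ := A.exists_eqOn_pow_smul_of_taylorCoeff_eq_zero (k := k) hz hφ hz0
    fun i hi => by simpa [hi.ne] using hF ⟨i, by omega⟩
  have hxG : x = deriv φ z ^ k • A.toFun G z := by
    rw [← A.taylorCoeff_eq_of_eqOn_pow_smul hz (hφ.analyticOnNhd z hz) hz0 hFG]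
    simpa using (hF (Fin.last k)).symm
  refine ⟨deriv φ z ^ k • G, fun i => ?_, by rw [norm_smul, norm_pow, hGF]⟩
  simp [Fin.fin_one_eq_zero i, taylorCoeff, hxG]

/-- **Key lemma: `(x,0,…,0) ∈ Z^(k+1)` implies `x ∈ Z^(1)`.**
Let `𝓕` be an admissible space of analytic functions with base point `z ∈ U`, let
`φ : U → 𝔻` be a conformal equivalence with `φ z = 0` and `k ≥ 1`. If the tuple whose
`k`-th Taylor position is `x` and whose lower positions vanish belongs to `Z^(k+1)`,
then `x ∈ Z^(1)` and `‖x‖_{Z^(1)} ≤ |φ′(z)|^k ‖(x,0,…,0)‖_{Z^(k+1)}`. -/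
theorem AdmissibleSpace.mem_Z1_of_corner (A : AdmissibleSpace U W 𝓕) (z : ℂ) (hz : z ∈ U)
    (φ : ℂ → ℂ) (hφ : IsConfEquiv U φ) (hz0 : φ z = 0) (k : ℕ) (hk : 1 ≤ k) (x : W)
    (hx : (fun i : Fin (k + 1) => if (i : ℕ) = k then x else 0) ∈ Zset A z (k + 1)) :
    ((fun _ : Fin 1 => x) ∈ Zset A z 1) ∧
      Znorm A z 1 (fun _ : Fin 1 => x) ≤
        ‖deriv φ z‖ ^ k *
          Znorm A z (k + 1) (fun i : Fin (k + 1) => if (i : ℕ) = k then x else 0) :=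
  AdmissibleSpace.mem_Z1_of_corner_general A z hz φ hφ hz0 k x hx
end
end

section
/- Let A, B, C, D, E be Banach spaces and suppose given bounded linear operators forming a commutative diagram with exact rows 0 → A →^I B →^Q C → 0 and 0 → D →^J E →^R C → 0, together with bounded operators t : A → D and T : B → E satisfying T ∘ I = J ∘ t and R ∘ T = Q. If Q and t are strictly singular, then T is strictly singular. -/
/-!
Suppose `T` is bounded below on an infinite-dimensional closed subspace `M ⊆ B`. Since `Q` is a
strictly singular surjection, every infinite-dimensional closed subspace of `M` contains unit
vectors arbitrarily close to `ker Q = range I`. Choosing such vectors `xₙ` inductively, each in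
the kernels of norming functionals `fᵢ` of the earlier `xᵢ` (`fᵢ xᵢ = 1`, `‖fᵢ‖ ≤ 1`), controls
the coefficients of their combinations: `‖λⱼ‖ ≤ 2ʲ ‖∑ λᵢ xᵢ‖`. Hence vectors `kₙ ∈ ker Q` with
`‖kₙ - xₙ‖ ≤ δ / 4ⁿ` are linearly independent and `T` stays bounded below on their span. Through
the isomorphism `A ≃ ker Q` induced by `I` and the identity `T ∘ I = J ∘ t`, this makes `t`
bounded below on an infinite-dimensional closed subspace of `A`.
-/

/-- A bounded linear operator between Banach spaces is *strictly singular* if there is no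
infinite-dimensional closed subspace of its domain on which it is bounded below. -/
def StrictlySingular {X Y : Type*} [NormedAddCommGroup X] [NormedSpace ℂ X]
    [NormedAddCommGroup Y] [NormedSpace ℂ Y] (T : X →L[ℂ] Y) : Prop :=
  ¬∃ (M : Submodule ℂ X) (c : ℝ), 0 < c ∧ IsClosed (M : Set X) ∧
    ¬FiniteDimensional ℂ M ∧ ∀ x ∈ M, c * ‖x‖ ≤ ‖T x‖

open Finset

theorem Finsupp.linearCombination_eq_sum_range {R X : Type*} [Semiring R] [AddCommMonoid X]
    [Module R X] (v : ℕ → X) {l : ℕ →₀ R} {N : ℕ} (hN : l.support ⊆ range N) :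
    Finsupp.linearCombination R v l = ∑ i ∈ range N, l i • v i := by
  rw [Finsupp.linearCombination_apply, Finsupp.sum_of_support_subset l hN _ (by simp)]

section TriangularSystem

variable {𝕜 X : Type*} [NontriviallyNormedField 𝕜] [SeminormedAddCommGroup X] [NormedSpace 𝕜 X]

structure IsTriangularSystem (x : ℕ → X) (f : ℕ → StrongDual 𝕜 X) : Prop where
  norm_le_one : ∀ i, ‖x i‖ ≤ 1
  norm_dual_le_one : ∀ i, ‖f i‖ ≤ 1
  apply_self : ∀ i, f i (x i) = 1
  apply_of_lt : ∀ {i j}, i < j → f i (x j) = 0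

namespace IsTriangularSystem

variable {x : ℕ → X} {f : ℕ → StrongDual 𝕜 X}

theorem norm_coeff_le (h : IsTriangularSystem x f) (l : ℕ →₀ 𝕜) (j : ℕ) :
    ‖l j‖ ≤ 2 ^ j * ‖Finsupp.linearCombination 𝕜 x l‖ := by
  obtain ⟨N, hN⟩ := exists_nat_subset_range l.support
  rw [Finsupp.linearCombination_eq_sum_range x hN]
  set w := ∑ i ∈ range N, l i • x i
  induction j using Nat.strong_induction_on with
  | _ j ih =>
  by_cases hjN : N ≤ j
  · have : l j = 0 := Finsupp.notMem_support_iff.mp fun hj => by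
      have := mem_range.mp (hN hj); omega
    simp [this]
  push Not at hjN
  -- `f j` kills the terms with `i > j`, so it recovers `l j` up to the earlier coefficients
  have hfw : f j w = l j + ∑ i ∈ range j, l i * f j (x i) := by
    have hlate : ∑ i ∈ Ico (j + 1) N, l i * f j (x i) = 0 :=
      sum_eq_zero fun i hi => by rw [h.apply_of_lt (mem_Ico.mp hi).1, mul_zero]
    simp only [w, map_sum, map_smul, smul_eq_mul]
    rw [← sum_range_add_sum_Ico _ hjN, hlate, add_zero, sum_range_succ, h.apply_self, mul_one,
      add_comm]
  have hterm : ∀ i ∈ range j, ‖l i * f j (x i)‖ ≤ 2 ^ i * ‖w‖ := fun i hi => by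
    have hfx : ‖f j (x i)‖ ≤ 1 :=
      ((f j).le_opNorm _).trans (mul_le_one₀ (h.norm_dual_le_one j) (norm_nonneg _)
        (h.norm_le_one i))
    rw [norm_mul]
    exact (mul_le_mul (ih i (mem_range.mp hi)) hfx (norm_nonneg _) (by positivity)).trans_eq
      (mul_one _)
  have hfw_le : ‖f j w‖ ≤ ‖w‖ :=
    ((f j).le_opNorm w).trans (mul_le_of_le_one_left (norm_nonneg _) (h.norm_dual_le_one j))
  have hgeom : ∑ i ∈ range j, (2 : ℝ) ^ i = 2 ^ j - 1 := by
    rw [geom_sum_eq (by norm_num : (2 : ℝ) ≠ 1)]; norm_num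
  calc ‖l j‖ = ‖f j w - ∑ i ∈ range j, l i * f j (x i)‖ := by rw [hfw, add_sub_cancel_right]
    _ ≤ ‖w‖ + ∑ i ∈ range j, 2 ^ i * ‖w‖ :=
      norm_sub_le_of_le hfw_le ((norm_sum_le _ _).trans (sum_le_sum hterm))
    _ = 2 ^ j * ‖w‖ := by rw [← sum_mul, hgeom]; ring

theorem norm_linearCombination_sub_le (h : IsTriangularSystem x f) {y : ℕ → X} {δ : ℝ}
    (hy : ∀ i, ‖y i - x i‖ ≤ δ / 4 ^ i) (l : ℕ →₀ 𝕜) :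
    ‖Finsupp.linearCombination 𝕜 y l - Finsupp.linearCombination 𝕜 x l‖ ≤
      2 * δ * ‖Finsupp.linearCombination 𝕜 x l‖ := by
  set w := Finsupp.linearCombination 𝕜 x l
  have hδ : 0 ≤ δ := by simpa using (norm_nonneg _).trans (hy 0)
  obtain ⟨N, hN⟩ := exists_nat_subset_range l.support
  have hterm : ∀ i ∈ range N, ‖l i • (y i - x i)‖ ≤ δ * ‖w‖ * (1 / 2) ^ i := fun i _ => by
    have h4 : (4 : ℝ) ^ i = 2 ^ i * 2 ^ i := by rw [← mul_pow]; norm_num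
    calc ‖l i • (y i - x i)‖ ≤ 2 ^ i * ‖w‖ * (δ / 4 ^ i) := by
          rw [norm_smul]; gcongr; exacts [h.norm_coeff_le l i, hy i]
      _ = δ * ‖w‖ * (1 / 2) ^ i := by rw [h4, div_pow, one_pow]; field_simp
  calc ‖Finsupp.linearCombination 𝕜 y l - w‖
      = ‖∑ i ∈ range N, l i • (y i - x i)‖ := by
        simp only [w, Finsupp.linearCombination_eq_sum_range _ hN, ← sum_sub_distrib, smul_sub]
    _ ≤ ∑ i ∈ range N, δ * ‖w‖ * (1 / 2) ^ i := (norm_sum_le _ _).trans (sum_le_sum hterm)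
    _ ≤ δ * ‖w‖ * 2 := by rw [← mul_sum]; gcongr; exact sum_geometric_two_le N
    _ = 2 * δ * ‖w‖ := by ring

theorem linearIndependent_of_norm_sub_le (h : IsTriangularSystem x f) {y : ℕ → X} {δ : ℝ}
    (hδ : δ < 1 / 2) (hy : ∀ i, ‖y i - x i‖ ≤ δ / 4 ^ i) : LinearIndependent 𝕜 y := by
  rw [linearIndependent_iff]
  intro l hl
  have hx : ‖Finsupp.linearCombination 𝕜 x l‖ ≤ 0 := by
    have := h.norm_linearCombination_sub_le hy l
    rw [hl, zero_sub, norm_neg] at this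
    nlinarith [norm_nonneg (Finsupp.linearCombination 𝕜 x l)]
  ext j
  exact norm_le_zero_iff.mp
    ((h.norm_coeff_le l j).trans (mul_nonpos_of_nonneg_of_nonpos (by positivity) hx))

end IsTriangularSystem

end TriangularSystem

theorem Submodule.not_finiteDimensional_inf_ker {K V : Type*} [Field K] [AddCommGroup V]
    [Module K V] {N : Submodule K V} (hN : ¬FiniteDimensional K N) (g : V →ₗ[K] K) :
    ¬FiniteDimensional K ↥(N ⊓ LinearMap.ker g) := by
  simp only [← Submodule.fg_iff_finiteDimensional] at hN ⊢
  exact fun h => hN (N.fg_of_fg_map_of_fg_inf_ker g (IsNoetherian.noetherian _) h)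

section Construction

variable {𝕜 X : Type*} [RCLike 𝕜] [NormedAddCommGroup X] [NormedSpace 𝕜 X]

theorem exists_isTriangularSystem {M : Submodule 𝕜 X} (hMc : IsClosed (M : Set X))
    (hMf : ¬FiniteDimensional 𝕜 M) (P : ℕ → X → Prop)
    (hP : ∀ n (N : Submodule 𝕜 X), IsClosed (N : Set X) → ¬FiniteDimensional 𝕜 N → N ≤ M →
      ∃ x ∈ N, ‖x‖ = 1 ∧ P n x) :
    ∃ (x : ℕ → X) (f : ℕ → StrongDual 𝕜 X),
      IsTriangularSystem x f ∧ (∀ n, x n ∈ M) ∧ ∀ n, P n (x n) := by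
  let S := {N : Submodule 𝕜 X // IsClosed (N : Set X) ∧ ¬FiniteDimensional 𝕜 N ∧ N ≤ M}
  have step : ∀ n (N : S), ∃ p : X × StrongDual 𝕜 X,
      p.1 ∈ N.1 ∧ ‖p.1‖ = 1 ∧ P n p.1 ∧ ‖p.2‖ ≤ 1 ∧ p.2 p.1 = 1 := by
    rintro n ⟨N, hNc, hNf, hNM⟩
    obtain ⟨x, hxN, hx1, hPx⟩ := hP n N hNc hNf hNM
    obtain ⟨g, hg1, hgx⟩ := exists_dual_vector 𝕜 x (by simp [hx1])
    exact ⟨(x, g), hxN, hx1, hPx, hg1.le, by simp [hgx, hx1]⟩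
  choose p hpN hp1 hpP hpf hpx using step
  let next (k : ℕ) (Nk : S) : S :=
    ⟨Nk.1 ⊓ LinearMap.ker ((p k Nk).2 : X →ₗ[𝕜] 𝕜), Nk.2.1.inter (p k Nk).2.isClosed_ker,
      Submodule.not_finiteDimensional_inf_ker Nk.2.2.1 _, inf_le_left.trans Nk.2.2.2⟩
  let N (n : ℕ) : S := Nat.rec (motive := fun _ => S) ⟨M, hMc, hMf, le_rfl⟩ next n
  have hN : Antitone fun n => (N n).1 := antitone_nat_of_succ_le fun n => inf_le_left
  refine ⟨fun n => (p n (N n)).1, fun n => (p n (N n)).2,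
    ⟨fun n => (hp1 n _).le, fun n => hpf n _, fun n => hpx n _, fun {i j} hij => ?_⟩,
    fun n => (N n).2.2.2 (hpN n _), fun n => hpP n _⟩
  have hker : (N (i + 1)).1 ≤ LinearMap.ker ((p i (N i)).2 : X →ₗ[𝕜] 𝕜) := inf_le_right
  exact hker (hN hij (hpN j (N j)))

end Construction

section

variable {X Y Z : Type*} [NormedAddCommGroup X] [NormedSpace ℂ X] [NormedAddCommGroup Y]
  [NormedSpace ℂ Y] [NormedAddCommGroup Z] [NormedSpace ℂ Z]

theorem not_strictlySingular_of_linearIndependent {S : X →L[ℂ] Y} {v : ℕ → X}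
    (hv : LinearIndependent ℂ v) {c : ℝ} (hc : 0 < c) (hS : ∀ l : ℕ →₀ ℂ,
      c * ‖Finsupp.linearCombination ℂ v l‖ ≤ ‖S (Finsupp.linearCombination ℂ v l)‖) :
    ¬StrictlySingular S := by
  set V := Submodule.span ℂ (Set.range v)
  have hspan : (V : Set X) ⊆ {w | c * ‖w‖ ≤ ‖S w‖} := by
    rintro _ hw
    obtain ⟨l, rfl⟩ := (Finsupp.range_linearCombination (R := ℂ) (v := v)).ge hw
    exact hS l
  have hV : ¬FiniteDimensional ℂ V := fun _ =>
    Module.Finite.not_linearIndependent_of_infinite _ (linearIndependent_span hv)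
  refine not_not.mpr ⟨V.topologicalClosure, c, hc, V.isClosed_topologicalClosure,
    fun _ => hV (Submodule.finiteDimensional_of_le V.le_topologicalClosure), fun w hw => ?_⟩
  rw [← SetLike.mem_coe, Submodule.topologicalClosure_coe] at hw
  exact closure_minimal hspan
    (isClosed_le (continuous_const.mul continuous_norm) S.continuous.norm) hw

namespace StrictlySingular

theorem clm_comp {t : X →L[ℂ] Y} (ht : StrictlySingular t) (J : Y →L[ℂ] Z) :
    StrictlySingular (J.comp t) := by
  rintro ⟨M, c, hc, hMc, hMf, hM⟩
  refine ht ⟨M, c / (‖J‖ + 1), by positivity, hMc, hMf, fun x hx => ?_⟩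
  rw [div_mul_eq_mul_div, div_le_iff₀ (by positivity)]
  calc c * ‖x‖ ≤ ‖J (t x)‖ := hM x hx
    _ ≤ ‖J‖ * ‖t x‖ := J.le_opNorm _
    _ ≤ ‖t x‖ * (‖J‖ + 1) := by nlinarith [norm_nonneg (t x)]

theorem comp_continuousLinearEquiv {S : Y →L[ℂ] Z} (hS : StrictlySingular S) (e : X ≃L[ℂ] Y) :
    StrictlySingular (S.comp (e : X →L[ℂ] Y)) := by
  rintro ⟨M, c, hc, hMc, hMf, hM⟩
  refine hS ⟨M.map (e : X →ₗ[ℂ] Y), c / (‖(e : X →L[ℂ] Y)‖ + 1), by positivity, ?_, ?_, ?_⟩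
  · rw [Submodule.map_coe]
    exact e.toHomeomorph.isClosedMap _ hMc
  · exact fun h => hMf (Module.Finite.equiv (M.equivMapOfInjective _ e.injective).symm)
  · rintro _ ⟨x, hx, rfl⟩
    rw [div_mul_eq_mul_div, div_le_iff₀ (by positivity)]
    calc c * ‖e x‖ ≤ c * ((‖(e : X →L[ℂ] Y)‖ + 1) * ‖x‖) := by
          gcongr
          exact ((e : X →L[ℂ] Y).le_opNorm x).trans (by nlinarith [norm_nonneg x])
      _ = (c * ‖x‖) * (‖(e : X →L[ℂ] Y)‖ + 1) := by ring
      _ ≤ ‖S (e x)‖ * (‖(e : X →L[ℂ] Y)‖ + 1) := by gcongr; exact hM x hx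

theorem exists_norm_eq_one_norm_apply_le {S : X →L[ℂ] Y} (hS : StrictlySingular S)
    {N : Submodule ℂ X} (hNc : IsClosed (N : Set X)) (hNf : ¬FiniteDimensional ℂ N) {ε : ℝ}
    (hε : 0 < ε) : ∃ x ∈ N, ‖x‖ = 1 ∧ ‖S x‖ ≤ ε := by
  have : ¬∀ y ∈ N, ε * ‖y‖ ≤ ‖S y‖ := fun h => hS ⟨N, ε, hε, hNc, hNf, h⟩
  push Not at this
  obtain ⟨y, hyN, hy⟩ := this
  have hy0 : 0 < ‖y‖ := by
    by_contra! h
    have : ‖y‖ = 0 := le_antisymm h (norm_nonneg y)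
    simp [norm_eq_zero.mp this] at hy
  refine ⟨(‖y‖⁻¹ : ℂ) • y, N.smul_mem _ hyN, ?_, ?_⟩
  · rw [norm_smul, norm_inv, Complex.norm_real, norm_norm, inv_mul_cancel₀ hy0.ne']
  · rw [map_smul, norm_smul, norm_inv, Complex.norm_real, norm_norm, inv_mul_le_iff₀ hy0]
    linarith

theorem exists_norm_eq_one_norm_sub_le_of_surjective [CompleteSpace X] [CompleteSpace Y]
    {Q : X →L[ℂ] Y} (hQ : Function.Surjective Q) (hQss : StrictlySingular Q)
    {N : Submodule ℂ X} (hNc : IsClosed (N : Set X)) (hNf : ¬FiniteDimensional ℂ N) {ε : ℝ}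
    (hε : 0 < ε) : ∃ x ∈ N, ‖x‖ = 1 ∧ ∃ k ∈ LinearMap.ker (Q : X →ₗ[ℂ] Y), ‖x - k‖ ≤ ε := by
  obtain ⟨γ, hγ, hpre⟩ := Q.exists_preimage_norm_le hQ
  obtain ⟨x, hxN, hx1, hQx⟩ := hQss.exists_norm_eq_one_norm_apply_le hNc hNf (div_pos hε hγ)
  obtain ⟨b, hb, hbn⟩ := hpre (Q x)
  refine ⟨x, hxN, hx1, x - b, by simp [hb], ?_⟩
  calc ‖x - (x - b)‖ = ‖b‖ := by rw [sub_sub_cancel]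
    _ ≤ γ * (ε / γ) := hbn.trans (by gcongr)
    _ = ε := by field_simp

end StrictlySingular

end

theorem ContinuousLinearMap.div_three_mul_norm_le_of_norm_sub_le {𝕜 X Y : Type*}
    [NontriviallyNormedField 𝕜] [SeminormedAddCommGroup X] [NormedSpace 𝕜 X]
    [SeminormedAddCommGroup Y] [NormedSpace 𝕜 Y] (T : X →L[𝕜] Y) {v w : X} {c ε : ℝ}
    (hw : c * ‖w‖ ≤ ‖T w‖) (hvw : ‖v - w‖ ≤ ε * ‖w‖) (hε : ε ≤ 1 / 2) (hεT : ε * ‖T‖ ≤ c / 2) :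
    c / 3 * ‖v‖ ≤ ‖T v‖ := by
  have hTvw : ‖T v - T w‖ ≤ c / 2 * ‖w‖ := by
    rw [← map_sub]
    calc ‖T (v - w)‖ ≤ ‖T‖ * (ε * ‖w‖) := (T.le_opNorm _).trans (by gcongr)
      _ = ε * ‖T‖ * ‖w‖ := by ring
      _ ≤ c / 2 * ‖w‖ := by gcongr
  have hv : ‖v‖ ≤ 3 / 2 * ‖w‖ := by
    have := norm_le_norm_add_norm_sub' v w
    nlinarith [norm_nonneg w]
  rcases le_or_gt c 0 with hc | hc
  · exact (mul_nonpos_of_nonpos_of_nonneg (by linarith) (norm_nonneg v)).trans (norm_nonneg _)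
  calc c / 3 * ‖v‖ ≤ c / 3 * (3 / 2 * ‖w‖) := by gcongr
    _ = c * ‖w‖ - c / 2 * ‖w‖ := by ring
    _ ≤ ‖T w‖ - ‖T v - T w‖ := sub_le_sub hw hTvw
    _ ≤ ‖T v‖ := by linarith [norm_sub_norm_le (T w) (T v), norm_sub_rev (T v) (T w)]

theorem StrictlySingular.of_comp_subtypeL_ker {B C E : Type*} [NormedAddCommGroup B]
    [NormedSpace ℂ B] [CompleteSpace B] [NormedAddCommGroup C] [NormedSpace ℂ C] [CompleteSpace C]
    [NormedAddCommGroup E] [NormedSpace ℂ E] {Q : B →L[ℂ] C} (hQ : Function.Surjective Q)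
    (hQss : StrictlySingular Q) {T : B →L[ℂ] E}
    (hT : StrictlySingular (T.comp (LinearMap.ker (Q : B →ₗ[ℂ] C)).subtypeL)) :
    StrictlySingular T := by
  rintro ⟨M, c, hc, hMc, hMf, hTM⟩
  set K := LinearMap.ker (Q : B →ₗ[ℂ] C)
  set δ := c / (4 * (‖T‖ + c))
  have hδ4 : δ ≤ 1 / 4 := by rw [div_le_iff₀ (by positivity)]; linarith [norm_nonneg T]
  have hδT : 2 * δ * ‖T‖ ≤ c / 2 := by
    simp only [δ]
    field_simp
    nlinarith [norm_nonneg T]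
  obtain ⟨x, f, hxf, hxM, hk⟩ := exists_isTriangularSystem hMc hMf
    (fun n x => ∃ k ∈ K, ‖x - k‖ ≤ δ / 4 ^ n) fun n N hNc hNf _ =>
      hQss.exists_norm_eq_one_norm_sub_le_of_surjective hQ hNc hNf (by positivity)
  choose k hkK hxk using hk
  have hkx : ∀ i, ‖k i - x i‖ ≤ δ / 4 ^ i := fun i => norm_sub_rev (x i) (k i) ▸ hxk i
  let v (n : ℕ) : K := ⟨k n, hkK n⟩
  refine not_strictlySingular_of_linearIndependent (v := v)
    (.of_comp K.subtype (hxf.linearIndependent_of_norm_sub_le (by linarith) hkx))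
    (c := c / 3) (by positivity) (fun l => ?_) hT
  have hcoe : (Finsupp.linearCombination ℂ v l : B) = Finsupp.linearCombination ℂ k l :=
    Finsupp.apply_linearCombination ℂ K.subtype v l
  change c / 3 * ‖(Finsupp.linearCombination ℂ v l : B)‖ ≤ ‖T (Finsupp.linearCombination ℂ v l)‖
  rw [hcoe]
  have hxl : Finsupp.linearCombination ℂ x l ∈ M :=
    Submodule.span_le.mpr (Set.range_subset_iff.mpr hxM)
      (Finsupp.range_linearCombination (R := ℂ) (v := x) ▸ LinearMap.mem_range_self _ l)
  exact T.div_three_mul_norm_le_of_norm_sub_le (hTM _ hxl)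
    (hxf.norm_linearCombination_sub_le hkx l) (by linarith) hδT

theorem strictlySingular_of_diagram_general
    {A B C D E : Type*}
    [NormedAddCommGroup A] [NormedSpace ℂ A] [CompleteSpace A]
    [NormedAddCommGroup B] [NormedSpace ℂ B] [CompleteSpace B]
    [NormedAddCommGroup C] [NormedSpace ℂ C] [CompleteSpace C]
    [NormedAddCommGroup D] [NormedSpace ℂ D]
    [NormedAddCommGroup E] [NormedSpace ℂ E]
    (I : A →L[ℂ] B) (Q : B →L[ℂ] C) (J : D →L[ℂ] E)
    (t : A →L[ℂ] D) (T : B →L[ℂ] E)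
    -- exactness of the first row
    (hI : Function.Injective I) (hQ : Function.Surjective Q)
    (hIQ : LinearMap.range (I : A →ₗ[ℂ] B) = LinearMap.ker (Q : B →ₗ[ℂ] C))
    -- commutativity of the diagram
    (hcomm₁ : ∀ a : A, T (I a) = J (t a))
    (hQss : StrictlySingular Q) (htss : StrictlySingular t) :
    StrictlySingular T := by
  have hIc : IsClosed (Set.range I) := by
    have : Set.range I = (LinearMap.ker (Q : B →ₗ[ℂ] C) : Set B) := by
      rw [← hIQ, LinearMap.coe_range]; rfl
    exact this ▸ Q.isClosed_ker
  let e : A ≃L[ℂ] LinearMap.ker (Q : B →ₗ[ℂ] C) :=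
    (I.equivRange hI hIc).trans (.ofEq _ _ hIQ)
  have hTK : T.comp (LinearMap.ker (Q : B →ₗ[ℂ] C)).subtypeL =
      (J.comp t).comp (e.symm : _ →L[ℂ] A) := by
    ext y
    have : I (e.symm y) = y := congrArg Subtype.val (e.apply_symm_apply y)
    simp [← hcomm₁, this]
  exact .of_comp_subtypeL_ker hQ hQss (hTK ▸ (htss.clm_comp J).comp_continuousLinearEquiv e.symm)

/-- **The 3-lemma for strictly singular operators.**
Given a commutative diagram of Banach spaces with exact rows
`0 → A → B → C → 0` and `0 → D → E → C → 0` and vertical arrows `t : A → D`,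
`T : B → E` (and the identity on `C`), if `Q` and `t` are strictly singular then so
is `T`. -/
theorem strictlySingular_of_diagram
    {A B C D E : Type*}
    [NormedAddCommGroup A] [NormedSpace ℂ A] [CompleteSpace A]
    [NormedAddCommGroup B] [NormedSpace ℂ B] [CompleteSpace B]
    [NormedAddCommGroup C] [NormedSpace ℂ C] [CompleteSpace C]
    [NormedAddCommGroup D] [NormedSpace ℂ D] [CompleteSpace D]
    [NormedAddCommGroup E] [NormedSpace ℂ E] [CompleteSpace E]
    (I : A →L[ℂ] B) (Q : B →L[ℂ] C) (J : D →L[ℂ] E) (R : E →L[ℂ] C)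
    (t : A →L[ℂ] D) (T : B →L[ℂ] E)
    -- exactness of the first row
    (hI : Function.Injective I) (hQ : Function.Surjective Q)
    (hIQ : LinearMap.range (I : A →ₗ[ℂ] B) = LinearMap.ker (Q : B →ₗ[ℂ] C))
    -- exactness of the second row
    (hJ : Function.Injective J) (hR : Function.Surjective R)
    (hJR : LinearMap.range (J : D →ₗ[ℂ] E) = LinearMap.ker (R : E →ₗ[ℂ] C))
    -- commutativity of the diagram
    (hcomm₁ : ∀ a : A, T (I a) = J (t a))
    (hcomm₂ : ∀ b : B, R (T b) = Q b)
    (hQss : StrictlySingular Q) (htss : StrictlySingular t) :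
    StrictlySingular T :=
  strictlySingular_of_diagram_general I Q J t T hI hQ hIQ hcomm₁ hQss htss
end

section
/- Let 0 → A →^I B →^Q C → 0 be an exact sequence of Banach spaces and bounded linear operators in which Q is strictly singular. If A contains no complemented subspace isomorphic to ℓ₂, then B contains no complemented subspace isomorphic to ℓ₂. -/
/-- A Banach space `X` *contains a complemented copy of `ℓ₂`* if there is a closed
subspace `X'` of `X` which is the range of a bounded linear projection and is
isomorphic (linearly homeomorphic) to the Hilbert space `ℓ₂` of square-summable
sequences. -/
def ContainsComplementedL2 (X : Type*) [NormedAddCommGroup X] [NormedSpace ℂ X] : Prop :=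
  ∃ (X' : Submodule ℂ X) (P : X →L[ℂ] X),
    IsClosed (X' : Set X) ∧ LinearMap.range (P : X →ₗ[ℂ] X) = X' ∧ (∀ x ∈ X', P x = x) ∧
    Nonempty (X' ≃L[ℂ] ↥(lp (fun _ : ℕ => ℂ) 2))

open scoped InnerProductSpace lp

section Retract

variable {𝕜 E X Y : Type*} [NontriviallyNormedField 𝕜] [NormedAddCommGroup E] [NormedSpace 𝕜 E]
  [NormedAddCommGroup X] [NormedSpace 𝕜 X] [NormedAddCommGroup Y] [NormedSpace 𝕜 Y]

/-- The witnesses are `j' = (1 - W p) j` and `p' = p (1 - W p)⁻¹`, by a Neumann series. -/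
theorem exists_comp_eq_id_comp_eq_zero_of_norm_mul_lt_one [CompleteSpace X] (Q : X →L[𝕜] Y)
    {j : E →L[𝕜] X} {p : X →L[𝕜] E} (hpj : p.comp j = .id 𝕜 E) {W : E →L[𝕜] X}
    (hQW : Q.comp W = Q.comp j) (hW : ‖W‖ * ‖p‖ < 1) :
    ∃ (j' : E →L[𝕜] X) (p' : X →L[𝕜] E), p'.comp j' = .id 𝕜 E ∧ Q.comp j' = 0 := by
  have hWp : ‖W.comp p‖ < 1 := (W.opNorm_comp_le p).trans_lt hW
  set T : X ≃L[𝕜] X := ContinuousLinearEquiv.unitsEquiv 𝕜 X (Units.oneSub _ hWp)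
  have hT (x : X) : T x = x - W (p x) := rfl
  refine ⟨T.toContinuousLinearMap.comp j, p.comp T.symm.toContinuousLinearMap, ?_, ?_⟩
  · ext1 x
    simpa using congr($hpj x)
  · ext1 x
    have hpjx : p (j x) = x := congr($hpj x)
    have hQWx : Q (W x) = Q (j x) := congr($hQW x)
    simp [hT, hpjx, hQWx]

theorem exists_comp_eq_of_range_subset [CompleteSpace X] [CompleteSpace Y] {I : X →L[𝕜] Y}
    (hI : Function.Injective I) (hIc : IsClosed (Set.range I)) {j : E →L[𝕜] Y}
    (hj : Set.range j ⊆ Set.range I) : ∃ j' : E →L[𝕜] X, I.comp j' = j :=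
  ⟨(I.equivRange hI hIc).symm.toContinuousLinearMap.comp (j.codRestrict _ fun x => hj ⟨x, rfl⟩),
    by ext1 x; exact congr_arg Subtype.val ((I.equivRange hI hIc).apply_symm_apply _)⟩

end Retract

section Hilbert

variable {𝕜 E X Y : Type*} [RCLike 𝕜] [NormedAddCommGroup E] [InnerProductSpace 𝕜 E]
  [NormedAddCommGroup X] [NormedSpace 𝕜 X] [NormedAddCommGroup Y] [NormedSpace 𝕜 Y]

theorem Submodule.not_finiteDimensional_orthogonal (K : Submodule 𝕜 E) [FiniteDimensional 𝕜 K]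
    (hE : ¬FiniteDimensional 𝕜 E) : ¬FiniteDimensional 𝕜 Kᗮ := by
  intro hK
  have : FiniteDimensional 𝕜 ↥(K ⊔ Kᗮ) := inferInstance
  rw [K.sup_orthogonal_of_hasOrthogonalProjection] at this
  exact hE Submodule.topEquiv.finiteDimensional

theorem exists_comp_eq_of_summable_norm [CompleteSpace X] {ι : Type*} (Q : X →L[𝕜] Y) {C : ℝ}
    (hC : ∀ y, ∃ x, Q x = y ∧ ‖x‖ ≤ C * ‖y‖) (b : HilbertBasis ι 𝕜 E) (S : E →L[𝕜] Y)
    (hS : Summable fun i => ‖S (b i)‖) :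
    ∃ W : E →L[𝕜] X, Q.comp W = S ∧ ‖W‖ ≤ C * ∑' i, ‖S (b i)‖ := by
  choose w hQw hw using fun i => hC (S (b i))
  set F : ι → E →L[𝕜] X := fun i => (innerSL 𝕜 (b i)).smulRight (w i)
  have hF (i : ι) : ‖F i‖ ≤ C * ‖S (b i)‖ := by
    simpa [F, ContinuousLinearMap.norm_smulRight_apply, b.orthonormal.1 i] using hw i
  have hFs : Summable fun i => ‖F i‖ :=
    .of_nonneg_of_le (fun _ => norm_nonneg _) hF (hS.mul_left C)
  refine ⟨∑' i, F i, ?_, ?_⟩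
  · ext1 x
    have hx : HasSum (fun i => ⟪b i, x⟫_𝕜 • S (b i)) (S x) := by
      simpa [b.repr_apply_apply] using (b.hasSum_repr x).mapL S
    refine ((hFs.of_norm.hasSum.mapL (.apply 𝕜 X x)).mapL Q).unique ?_
    convert hx using 2 with i
    simp [F, hQw]
  · calc ‖∑' i, F i‖ ≤ ∑' i, ‖F i‖ := norm_tsum_le_tsum_norm hFs
      _ ≤ ∑' i, C * ‖S (b i)‖ := Summable.tsum_le_tsum hF hFs (hS.mul_left C)
      _ = C * ∑' i, ‖S (b i)‖ := tsum_mul_left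

end Hilbert

section StrictlySingular

variable {E X Y : Type*} [NormedAddCommGroup E] [NormedAddCommGroup X] [NormedSpace ℂ X]
  [NormedAddCommGroup Y] [NormedSpace ℂ Y]

theorem containsComplementedL2_iff :
    ContainsComplementedL2 X ↔
      ∃ (j : ℓ²(ℕ, ℂ) →L[ℂ] X) (p : X →L[ℂ] ℓ²(ℕ, ℂ)), p.comp j = .id ℂ ℓ²(ℕ, ℂ) := by
  constructor
  · rintro ⟨X', P, -, hPX', hPid, ⟨e⟩⟩
    have hPmem (x : X) : P x ∈ X' := hPX' ▸ LinearMap.mem_range_self (P : X →ₗ[ℂ] X) x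
    refine ⟨X'.subtypeL.comp e.symm.toContinuousLinearMap,
      e.toContinuousLinearMap.comp (P.codRestrict X' hPmem), ?_⟩
    ext1 y
    have hP : P.codRestrict X' hPmem (e.symm y) = e.symm y := Subtype.ext (hPid _ (e.symm y).2)
    simp [hP]
  · rintro ⟨j, p, hpj⟩
    have hpj' (y : ℓ²(ℕ, ℂ)) : p (j y) = y := congr($hpj y)
    set X' := LinearMap.range (j : ℓ²(ℕ, ℂ) →ₗ[ℂ] X)
    have hX' : (X' : Set X) = {x | j (p x) = x} := by
      ext x
      exact ⟨by rintro ⟨y, rfl⟩; simp [hpj'], fun hx => ⟨p x, hx⟩⟩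
    refine ⟨X', j.comp p, ?_, ?_, ?_, ⟨?_⟩⟩
    · rw [hX']
      exact isClosed_eq (by fun_prop) continuous_id
    · refine le_antisymm (LinearMap.range_comp_le_range _ _) ?_
      rintro _ ⟨y, rfl⟩
      exact ⟨j y, by simp [hpj']⟩
    · rintro _ ⟨y, rfl⟩
      simp [hpj']
    · exact .equivOfInverse (p.comp X'.subtypeL)
        (j.codRestrict _ (LinearMap.mem_range_self (j : ℓ²(ℕ, ℂ) →ₗ[ℂ] X)))
        (by rintro ⟨_, y, rfl⟩; ext1; simp [hpj']) hpj'

theorem StrictlySingular.exists_norm_eq_one_norm_lt {T : X →L[ℂ] Y} (hT : StrictlySingular T)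
    {M : Submodule ℂ X} (hMc : IsClosed (M : Set X)) (hM : ¬FiniteDimensional ℂ M)
    {ε : ℝ} (hε : 0 < ε) : ∃ x ∈ M, ‖x‖ = 1 ∧ ‖T x‖ < ε := by
  by_contra! h
  refine hT ⟨M, ε, hε, hMc, hM, fun x hx => ?_⟩
  rcases eq_or_ne x 0 with rfl | hx0
  · simp
  have hεx := h _ (M.smul_mem (‖x‖⁻¹ : ℂ) hx) (norm_smul_inv_norm hx0)
  rw [map_smul, norm_smul, norm_inv, Complex.norm_real, norm_norm] at hεx
  rwa [← le_inv_mul_iff₀' (norm_pos_iff.2 hx0)]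

theorem StrictlySingular.comp_of_isClosedEmbedding [NormedSpace ℂ E] {T : X →L[ℂ] Y}
    (hT : StrictlySingular T) {j : E →L[ℂ] X} (hj : Topology.IsClosedEmbedding j) :
    StrictlySingular (T.comp j) := by
  rintro ⟨M, c, hc, hMc, hM, hbound⟩
  refine hT ⟨M.map (j : E →ₗ[ℂ] X), c / (‖j‖ + 1), by positivity, ?_, ?_, ?_⟩
  · rw [Submodule.map_coe]
    exact hj.isClosedMap _ hMc
  · exact fun h => hM (Submodule.equivMapOfInjective _ hj.injective M).symm.finiteDimensional
  · rintro _ ⟨x, hx, rfl⟩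
    calc c / (‖j‖ + 1) * ‖j x‖ ≤ c / (‖j‖ + 1) * ((‖j‖ + 1) * ‖x‖) := by
          gcongr
          nlinarith [j.le_opNorm x, norm_nonneg x]
      _ = c * ‖x‖ := by field_simp
      _ ≤ ‖T (j x)‖ := hbound x hx

theorem StrictlySingular.exists_orthonormal_tsum_le [InnerProductSpace ℂ E] {T : E →L[ℂ] Y}
    (hT : StrictlySingular T) (hE : ¬FiniteDimensional ℂ E) {δ : ℝ} (hδ : 0 < δ) :
    ∃ u : ℕ → E, Orthonormal ℂ u ∧ Summable (fun n => ‖T (u n)‖) ∧ ∑' n, ‖T (u n)‖ ≤ δ := by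
  set ε : ℕ → ℝ := fun k => δ / 2 * (1 / 2) ^ k
  have hε : HasSum ε δ := by
    simpa [ε] using hasSum_geometric_two.mul_left (δ / 2)
  -- Each new vector carries an index `k`, larger than all earlier ones, fixing its tolerance `ε k`.
  obtain ⟨f, hfP, hfr⟩ := exists_seq_of_forall_finset_exists
    (fun v : ℕ × E => ‖v.2‖ = 1 ∧ ‖T v.2‖ < ε v.1)
    (fun v w : ℕ × E => v.1 < w.1 ∧ ⟪v.2, w.2⟫_ℂ = 0) fun s _ => by
      set K := Submodule.span ℂ (Prod.snd '' (s : Set (ℕ × E)))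
      have : FiniteDimensional ℂ K := .span_of_finite ℂ (s.finite_toSet.image _)
      obtain ⟨y, hyK, hy, hTy⟩ := hT.exists_norm_eq_one_norm_lt K.isClosed_orthogonal
        (K.not_finiteDimensional_orthogonal hE) (by positivity : 0 < ε (s.sup Prod.fst + 1))
      refine ⟨(s.sup Prod.fst + 1, y), ⟨hy, hTy⟩, fun v hv => ⟨Nat.lt_succ_of_le (s.le_sup hv), ?_⟩⟩
      exact K.inner_right_of_mem_orthogonal (Submodule.subset_span (Set.mem_image_of_mem _ hv)) hyK
  have hk : StrictMono fun n => (f n).1 := fun m n hmn => (hfr m n hmn).1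
  have hle (n : ℕ) : ‖T (f n).2‖ ≤ ε (f n).1 := (hfP n).2.le
  have hεk : Summable fun n => ε (f n).1 := hε.summable.comp_injective hk.injective
  have hTf : Summable fun n => ‖T (f n).2‖ := .of_nonneg_of_le (fun _ => norm_nonneg _) hle hεk
  refine ⟨fun n => (f n).2, ⟨fun n => (hfP n).1, fun m n hmn => ?_⟩, hTf, ?_⟩
  · rcases hmn.lt_or_gt with h | h
    · exact (hfr m n h).2
    · exact inner_eq_zero_symm.1 (hfr n m h).2
  calc ∑' n, ‖T (f n).2‖ ≤ ∑' n, ε (f n).1 := Summable.tsum_le_tsum hle hTf hεk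
    _ ≤ ∑' n, ε n := tsum_comp_le_tsum_of_inj hε.summable (fun _ => by positivity) hk.injective
    _ = δ := hε.tsum_eq

theorem StrictlySingular.exists_comp_eq_id_comp_eq_zero [InnerProductSpace ℂ E] [CompleteSpace E]
    [CompleteSpace X] [CompleteSpace Y] {Q : X →L[ℂ] Y} (hQ : Function.Surjective Q)
    (hE : ¬FiniteDimensional ℂ E) {j : E →L[ℂ] X} {p : X →L[ℂ] E} (hpj : p.comp j = .id ℂ E)
    (hQj : StrictlySingular (Q.comp j)) :
    ∃ (j' : ℓ²(ℕ, ℂ) →L[ℂ] X) (p' : X →L[ℂ] ℓ²(ℕ, ℂ)), p'.comp j' = .id ℂ _ ∧ Q.comp j' = 0 := by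
  obtain ⟨C, hC, hCQ⟩ := Q.exists_preimage_norm_le hQ
  obtain ⟨u, hu, hsum, hsmall⟩ :=
    hQj.exists_orthonormal_tsum_le hE (δ := (C * (‖p‖ + 1))⁻¹) (by positivity)
  set V : ℓ²(ℕ, ℂ) →L[ℂ] E := hu.orthogonalFamily.linearIsometry.toContinuousLinearMap
  have hVV : V.adjoint.comp V = .id ℂ _ :=
    V.norm_map_iff_adjoint_comp_self.1 hu.orthogonalFamily.linearIsometry.norm_map
  set b : HilbertBasis ℕ ℂ ℓ²(ℕ, ℂ) := default
  have hVb (n : ℕ) : V (b n) = u n := by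
    rw [← b.repr_symm_single]
    exact (hu.orthogonalFamily.linearIsometry_apply_single (1 : ℂ)).trans (one_smul ℂ (u n))
  obtain ⟨W, hQW, hW⟩ :=
    exists_comp_eq_of_summable_norm Q hCQ b ((Q.comp j).comp V) (by simpa [hVb] using hsum)
  refine exists_comp_eq_id_comp_eq_zero_of_norm_mul_lt_one Q (j := j.comp V)
    (p := V.adjoint.comp p) ?_ (by rw [hQW, ContinuousLinearMap.comp_assoc]) ?_
  · rw [ContinuousLinearMap.comp_assoc, ← ContinuousLinearMap.comp_assoc p j V, hpj,
      ContinuousLinearMap.id_comp, hVV]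
  have hVp : ‖V.adjoint.comp p‖ ≤ ‖p‖ := calc
    ‖V.adjoint.comp p‖ ≤ ‖V.adjoint‖ * ‖p‖ := V.adjoint.opNorm_comp_le p
    _ ≤ 1 * ‖p‖ := by
      gcongr
      rw [LinearIsometryEquiv.norm_map]
      exact hu.orthogonalFamily.linearIsometry.norm_toContinuousLinearMap_le
    _ = ‖p‖ := one_mul _
  calc ‖W‖ * ‖V.adjoint.comp p‖ ≤ C * (C * (‖p‖ + 1))⁻¹ * ‖p‖ := by
        gcongr
        refine hW.trans (mul_le_mul_of_nonneg_left ?_ hC.le)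
        simpa [hVb] using hsmall
    _ < 1 := by
        rw [mul_inv, ← mul_assoc, mul_inv_cancel₀ hC.ne', one_mul, inv_mul_lt_one₀ (by positivity)]
        linarith

end StrictlySingular

/-- **No complemented `ℓ₂` in twisted sums with strictly singular quotient.**
If `0 → A → B → C → 0` is an exact sequence of Banach spaces with strictly singular
quotient map `Q` and `A` contains no complemented subspace isomorphic to `ℓ₂`, then `B`
contains no complemented subspace isomorphic to `ℓ₂`. -/
theorem not_containsComplementedL2_of_exact
    {A B C : Type*}
    [NormedAddCommGroup A] [NormedSpace ℂ A] [CompleteSpace A]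
    [NormedAddCommGroup B] [NormedSpace ℂ B] [CompleteSpace B]
    [NormedAddCommGroup C] [NormedSpace ℂ C] [CompleteSpace C]
    (I : A →L[ℂ] B) (Q : B →L[ℂ] C)
    (hI : Function.Injective I) (hQ : Function.Surjective Q)
    (hIQ : LinearMap.range (I : A →ₗ[ℂ] B) = LinearMap.ker (Q : B →ₗ[ℂ] C))
    (hQss : StrictlySingular Q)
    (hA : ¬ContainsComplementedL2 A) :
    ¬ContainsComplementedL2 B := by
  rw [containsComplementedL2_iff] at hA ⊢
  rintro ⟨j, p, hpj⟩
  have hℓ₂ : ¬FiniteDimensional ℂ ℓ²(ℕ, ℂ) := fun _ =>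
    Module.Finite.not_linearIndependent_of_infinite _
      (default : HilbertBasis ℕ ℂ ℓ²(ℕ, ℂ)).orthonormal.linearIndependent
  have hj : Topology.IsClosedEmbedding j :=
    Function.LeftInverse.isClosedEmbedding (fun x => congr($hpj x)) p.continuous j.continuous
  obtain ⟨j', p', hpj', hQj'⟩ :=
    (hQss.comp_of_isClosedEmbedding hj).exists_comp_eq_id_comp_eq_zero hQ hℓ₂ hpj
  have hrange : Set.range I = LinearMap.ker (Q : B →ₗ[ℂ] C) := by
    rw [← hIQ, LinearMap.coe_range]
    rfl
  obtain ⟨j'', hj''⟩ := exists_comp_eq_of_range_subset hI (hrange ▸ Q.isClosed_ker) <| by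
    rintro _ ⟨x, rfl⟩
    rw [hrange]
    exact congr($hQj' x)
  exact hA ⟨j'', p'.comp I, by rw [ContinuousLinearMap.comp_assoc, hj'', hpj']⟩
end
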